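/- arXiv:2211.01597 — 6 statements merged into one kernel-verified Lean document; each statement's English description precedes it below -/
import Mathlib

section
/- With the notation below, the following congruences hold modulo 4: (1) 2(d_0d_2 + d_4d_6 + d_1d_3 + d_5d_7) ≡ b_0b_2 + b_1b_3 + c_0c_2 + c_1c_3; (2) 2(d_0d_7 + d_2d_5 + d_4d_3 + d_6d_1) ≡ b_0b_3 + b_2b_1 − c_0c_3 − c_2c_1; (3) 2(d_0d_3 + d_2d_1 + d_4d_7 + d_6d_5) ≡ b_0b_3 + b_2b_1 + c_0c_3 + c_2c_1; (4) 2(d_0d_5 + d_2d_7 + d_4d_1 + d_6d_3) ≡ b_0b_1 + b_2b_3 − c_0c_1 − c_2c_3; (5) 2(d_0d_1 + d_2d_3 + d_4d_5 + d_6d_7) ≡ b_0b_1 + b_2b_3 + c_0c_1 + c_2c_3. -/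
open Matrix Complex

def bI (a : ℕ → ℤ) (i : ℕ) : ℤ := (a i + a (i + 8)) + (a (i + 4) + a (i + 12))

def cI (a : ℕ → ℤ) (i : ℕ) : ℤ := (a i + a (i + 8)) - (a (i + 4) + a (i + 12))

def dd (a : ℕ → ℤ) (i : ℕ) : ℤ := a i - a (i + 8)

lemma two_mul_modEq {x y : ℤ} (h : x ≡ y [ZMOD 2]) : 2 * x ≡ 2 * y [ZMOD 4] := by
  have := h.mul_left' (c := 2)
  simpa using this

theorem stmt5 (a : ℕ → ℤ) :
    2 * (dd a 0 * dd a 2 + dd a 4 * dd a 6 + dd a 1 * dd a 3 + dd a 5 * dd a 7) ≡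
      bI a 0 * bI a 2 + bI a 1 * bI a 3 + cI a 0 * cI a 2 + cI a 1 * cI a 3 [ZMOD 4] ∧
    2 * (dd a 0 * dd a 7 + dd a 2 * dd a 5 + dd a 4 * dd a 3 + dd a 6 * dd a 1) ≡
      bI a 0 * bI a 3 + bI a 2 * bI a 1 - cI a 0 * cI a 3 - cI a 2 * cI a 1 [ZMOD 4] ∧
    2 * (dd a 0 * dd a 3 + dd a 2 * dd a 1 + dd a 4 * dd a 7 + dd a 6 * dd a 5) ≡
      bI a 0 * bI a 3 + bI a 2 * bI a 1 + cI a 0 * cI a 3 + cI a 2 * cI a 1 [ZMOD 4] ∧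
    2 * (dd a 0 * dd a 5 + dd a 2 * dd a 7 + dd a 4 * dd a 1 + dd a 6 * dd a 3) ≡
      bI a 0 * bI a 1 + bI a 2 * bI a 3 - cI a 0 * cI a 1 - cI a 2 * cI a 3 [ZMOD 4] ∧
    2 * (dd a 0 * dd a 1 + dd a 2 * dd a 3 + dd a 4 * dd a 5 + dd a 6 * dd a 7) ≡
      bI a 0 * bI a 1 + bI a 2 * bI a 3 + cI a 0 * cI a 1 + cI a 2 * cI a 3 [ZMOD 4]  := by
  have hd : ∀ i : ℕ, dd a i ≡ a i + a (i + 8) [ZMOD 2] := fun i =>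
    Int.ModEq.symm (Int.modEq_iff_dvd.mpr ⟨-a (i + 8), by unfold dd; ring⟩)
  have key : ∀ i j k l m n o p : ℕ,
      2 * (dd a i * dd a j + dd a k * dd a l + dd a m * dd a n + dd a o * dd a p) ≡
      2 * ((a i + a (i+8)) * (a j + a (j+8)) + (a k + a (k+8)) * (a l + a (l+8)) +
           (a m + a (m+8)) * (a n + a (n+8)) + (a o + a (o+8)) * (a p + a (p+8))) [ZMOD 4] := by
    intro i j k l m n o p
    exact two_mul_modEq (((((hd i).mul (hd j)).add ((hd k).mul (hd l))).add
      ((hd m).mul (hd n))).add ((hd o).mul (hd p)))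
  refine ⟨?_, ?_, ?_, ?_, ?_⟩
  · have := key 0 2 4 6 1 3 5 7
    have e : bI a 0 * bI a 2 + bI a 1 * bI a 3 + cI a 0 * cI a 2 + cI a 1 * cI a 3 =
        2 * ((a 0 + a 8) * (a 2 + a 10) + (a 4 + a 12) * (a 6 + a 14) +
             (a 1 + a 9) * (a 3 + a 11) + (a 5 + a 13) * (a 7 + a 15)) := by
      unfold bI cI; norm_num; ring
    rw [e]; exact this
  · have := key 0 7 2 5 4 3 6 1
    have e : bI a 0 * bI a 3 + bI a 2 * bI a 1 - cI a 0 * cI a 3 - cI a 2 * cI a 1 =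
        2 * ((a 0 + a 8) * (a 7 + a 15) + (a 2 + a 10) * (a 5 + a 13) +
             (a 4 + a 12) * (a 3 + a 11) + (a 6 + a 14) * (a 1 + a 9)) := by
      unfold bI cI; norm_num; ring
    rw [e]; exact this
  · have := key 0 3 2 1 4 7 6 5
    have e : bI a 0 * bI a 3 + bI a 2 * bI a 1 + cI a 0 * cI a 3 + cI a 2 * cI a 1 =
        2 * ((a 0 + a 8) * (a 3 + a 11) + (a 2 + a 10) * (a 1 + a 9) +
             (a 4 + a 12) * (a 7 + a 15) + (a 6 + a 14) * (a 5 + a 13)) := by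
      unfold bI cI; norm_num; ring
    rw [e]; exact this
  · have := key 0 5 2 7 4 1 6 3
    have e : bI a 0 * bI a 1 + bI a 2 * bI a 3 - cI a 0 * cI a 1 - cI a 2 * cI a 3 =
        2 * ((a 0 + a 8) * (a 5 + a 13) + (a 2 + a 10) * (a 7 + a 15) +
             (a 4 + a 12) * (a 1 + a 9) + (a 6 + a 14) * (a 3 + a 11)) := by
      unfold bI cI; norm_num; ring
    rw [e]; exact this
  · have := key 0 1 2 3 4 5 6 7
    have e : bI a 0 * bI a 1 + bI a 2 * bI a 3 + cI a 0 * cI a 1 + cI a 2 * cI a 3 =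
        2 * ((a 0 + a 8) * (a 1 + a 9) + (a 2 + a 10) * (a 3 + a 11) +
             (a 4 + a 12) * (a 5 + a 13) + (a 6 + a 14) * (a 7 + a 15)) := by
      unfold bI cI; norm_num; ring
    rw [e]; exact this
end

section
/- For all integers k, l, m, n: (1) D_4(2k+1, 2l, 2m, 2n) ≡ 8m+1 (mod 16); (2) D_4(2k, 2l+1, 2m+1, 2n+1) ≡ 8(k+l+n) − 3 (mod 16). -/
/-! The circulant determinant factors over the characters of `C₄` as
`D₄ = ((x₀ + x₂)² - (x₁ + x₃)²) * ((x₀ - x₂)² + (x₁ - x₃)²)`. When `x₀ + x₂` is odd and `x₁ + x₃`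
is even (as in both cases), both factors `P`, `Q` are `≡ 1 mod 4`, so `(P - 1)(Q - 1) ≡ 0 mod 16`
and `D₄ ≡ P + Q - 1 = 2(x₀² + x₂²) - 4x₁x₃ - 1 mod 16`. Evaluating this quadratic only needs
that `k(k + 1)` is even. -/

open Matrix Complex

def D4 (x0 x1 x2 x3 : ℤ) : ℤ :=
  (Matrix.of ![![x0, x1, x2, x3], ![x3, x0, x1, x2], ![x2, x3, x0, x1], ![x1, x2, x3, x0]]).det

theorem D4_eq_mul (x0 x1 x2 x3 : ℤ) :
    D4 x0 x1 x2 x3 = ((x0 + x2) ^ 2 - (x1 + x3) ^ 2) * ((x0 - x2) ^ 2 + (x1 - x3) ^ 2) := by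
  simp [D4, Matrix.det_succ_row_zero, Fin.sum_univ_succ, Fin.succAbove]
  ring

namespace Int

theorem sq_modEq_one_of_odd {u : ℤ} (hu : Odd u) : u ^ 2 ≡ 1 [ZMOD 4] :=
  sq_mod_four_eq_one_of_odd hu

theorem sq_modEq_zero_of_even {v : ℤ} (hv : Even v) : v ^ 2 ≡ 0 [ZMOD 4] := by
  obtain ⟨w, rfl⟩ := hv
  exact modEq_zero_iff_dvd.2 ⟨w ^ 2, by ring⟩

theorem mul_modEq_add_sub_one {a b : ℤ} (ha : a ≡ 1 [ZMOD 4]) (hb : b ≡ 1 [ZMOD 4]) :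
    a * b ≡ a + b - 1 [ZMOD 16] := by
  have h := mul_dvd_mul (modEq_iff_dvd.1 ha.symm) (modEq_iff_dvd.1 hb.symm)
  refine (modEq_iff_dvd.2 ?_).symm
  rw [show a * b - (a + b - 1) = (a - 1) * (b - 1) by ring]
  exact h

end Int

theorem D4_modEq_of_odd_of_even {x0 x1 x2 x3 : ℤ} (h02 : Odd (x0 + x2)) (h13 : Even (x1 + x3)) :
    D4 x0 x1 x2 x3 ≡ 2 * (x0 ^ 2 + x2 ^ 2) - 4 * x1 * x3 - 1 [ZMOD 16] := by
  have h02' : Odd (x0 - x2) := Int.odd_sub.2 (Int.odd_add.1 h02)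
  have h13' : Even (x1 - x3) := Int.even_sub.2 (Int.even_add.1 h13)
  have hP := (Int.sq_modEq_one_of_odd h02).sub (Int.sq_modEq_zero_of_even h13)
  have hQ := (Int.sq_modEq_one_of_odd h02').add (Int.sq_modEq_zero_of_even h13')
  rw [sub_zero] at hP
  rw [add_zero] at hQ
  rw [D4_eq_mul]
  convert Int.mul_modEq_add_sub_one hP hQ using 1
  ring

theorem stmt6 (k l m n : ℤ) :
    D4 (2 * k + 1) (2 * l) (2 * m) (2 * n) ≡ 8 * m + 1 [ZMOD 16] ∧
    D4 (2 * k) (2 * l + 1) (2 * m + 1) (2 * n + 1) ≡ 8 * (k + l + n) - 3 [ZMOD 16] := by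
  obtain ⟨a, ha⟩ := Int.even_mul_succ_self k
  obtain ⟨b, hb⟩ := Int.even_mul_succ_self m
  constructor
  · refine (D4_modEq_of_odd_of_even ⟨k + m, by ring⟩ ⟨l + n, by ring⟩).trans
      (Int.modEq_iff_dvd.2 ⟨l * n + m - a - b, ?_⟩)
    linear_combination (-8 : ℤ) * ha - 8 * hb
  · refine (D4_modEq_of_odd_of_even ⟨k + m, by ring⟩ ⟨l + n + 1, by ring⟩).trans
      (Int.modEq_iff_dvd.2 ⟨l * n + l + n + k - a - b, ?_⟩)
    linear_combination (-8 : ℤ) * ha - 8 * hb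
end

section
/- For all integers k, l, m, n: (1) D_4(2k,2l,2m,2n) is 2^4 times an odd integer if k+m ≢ l+n (mod 2), and is divisible by 2^8 if k+m ≡ l+n (mod 2); (2) D_4(2k+1,2l+1,2m+1,2n+1) is 2^4 times an odd integer if k+m ≢ l+n (mod 2), is 2^7 times an odd integer if (k+m)(l+n) ≡ −1 (mod 4), and is divisible by 2^9 otherwise; (3) D_4(2k,2l+1,2m,2n+1) is 2^5 times an odd integer if k−m ≡ l−n ≡ 1 (mod 2), is 2^6 times an odd integer if k ≡ m (mod 2) and (2k+2l+1)(2m+2n+1) ≡ ±3 (mod 8), and is divisible by 2^7 otherwise; (4) D_4(2k,2l,2m+1,2n+1) is 2^4 times an odd integer if (2k+2m+1)(2l+2n+1) ≡ ±3 (mod 8), and is divisible by 2^5 if (2k+2m+1)(2l+2n+1) ≡ ±1 (mod 8). -/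
open Matrix Complex

/-!
The characters of `C₄` factor the group determinant as
`D₄(a,b,c,d) = (a+b+c+d)(a-b+c-d)((a-c)² + (b-d)²)`.
For each parity pattern of the arguments, this writes `D₄` as a power of `2` times two linear
factors and a sum of two squares, whose `2`-adic valuations are read off from residues mod `4`.
The conditions mod `8` on a product `AB` of two odd numbers enter through
`AB = X² - Y²` with `X + Y` odd: `X² - Y² ≡ ±3 (mod 8)` exactly when the even one of `X, Y`
is `2 (mod 4)`.
-/

section TwoAdic

variable {x y : ℤ}

lemma odd_sq_add_sq_of_odd_add (h : Odd (x + y)) : Odd (x ^ 2 + y ^ 2) := by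
  simpa [parity_simps] using h

lemma even_sq_add_sq_of_even_add (h : Even (x + y)) : Even (x ^ 2 + y ^ 2) := by
  simpa [parity_simps] using h

lemma exists_odd_eq_two_mul_of_emod_four (h : x % 4 = 2) : ∃ t, Odd t ∧ x = 2 * t :=
  ⟨x / 2, Int.odd_iff.mpr (by omega), by omega⟩

lemma exists_odd_sq_add_sq_eq_two_mul (hx : Odd x) (hy : Odd y) :
    ∃ t, Odd t ∧ x ^ 2 + y ^ 2 = 2 * t := by
  obtain ⟨p, rfl⟩ := hx
  obtain ⟨q, rfl⟩ := hy
  exact ⟨2 * (p ^ 2 + p + q ^ 2 + q) + 1, odd_two_mul_add_one _, by ring⟩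

lemma exists_odd_sq_add_sq_eq_four_mul (hx : Even x) (h : (x + y) % 4 = 2) :
    ∃ t, Odd t ∧ x ^ 2 + y ^ 2 = 4 * t := by
  obtain ⟨p, rfl⟩ := hx
  obtain ⟨q, rfl⟩ : ∃ q, y = 2 * q := ⟨y / 2, by omega⟩
  exact ⟨p ^ 2 + q ^ 2, odd_sq_add_sq_of_odd_add (Int.odd_iff.mpr (by omega)), by ring⟩

lemma four_dvd_sq_add_sq (hx : Even x) (hy : Even y) : 4 ∣ x ^ 2 + y ^ 2 := by
  obtain ⟨p, rfl⟩ := hx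
  obtain ⟨q, rfl⟩ := hy
  exact ⟨p ^ 2 + q ^ 2, by ring⟩

lemma eight_dvd_sq_add_sq (hx : Even x) (h : (x + y) % 4 = 0) : 8 ∣ x ^ 2 + y ^ 2 := by
  obtain ⟨p, rfl⟩ := hx
  obtain ⟨q, rfl⟩ : ∃ q, y = 2 * q := ⟨y / 2, by omega⟩
  obtain ⟨r, hr⟩ := even_sq_add_sq_of_even_add (x := p) (y := q) (Int.even_iff.mpr (by omega))
  exact ⟨r, by linear_combination 4 * hr⟩

lemma eight_dvd_mul_of_add_emod_four (hx : Even x) (h : (x + y) % 4 = 2) : 8 ∣ x * y := by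
  obtain ⟨p, rfl⟩ := hx
  obtain ⟨q, rfl⟩ : ∃ q, y = 2 * q := ⟨y / 2, by omega⟩
  obtain ⟨r, hr⟩ : Even (p * q) := Int.even_mul.mpr (by simp only [Int.even_iff]; omega)
  exact ⟨r, by linear_combination 4 * hr⟩

lemma sq_emod_eight_of_even (hx : Even x) : x ^ 2 % 8 = 2 * (x % 4) := by
  obtain ⟨p, rfl⟩ := hx
  rcases Int.even_or_odd' p with ⟨q, rfl | rfl⟩ <;> ring_nf <;> omega

lemma sq_sub_sq_modEq_three_iff (h : Odd (x + y)) :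
    (x ^ 2 - y ^ 2 ≡ 3 [ZMOD 8] ∨ x ^ 2 - y ^ 2 ≡ -3 [ZMOD 8]) ↔ (x % 4 = 2 ∨ y % 4 = 2) := by
  unfold Int.ModEq
  rcases Int.even_or_odd x with hx | hx
  · have hy : Odd y := (Int.odd_add'.mp h).mpr hx
    have := sq_emod_eight_of_even hx
    have := Int.eight_dvd_sq_sub_one_of_odd hy
    have := Int.odd_iff.mp hy
    have := Int.even_iff.mp hx
    omega
  · have hy : Even y := (Int.odd_add.mp h).mp hx
    have := sq_emod_eight_of_even hy
    have := Int.eight_dvd_sq_sub_one_of_odd hx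
    have := Int.odd_iff.mp hx
    have := Int.even_iff.mp hy
    omega

lemma mul_modEq_neg_one_four_iff : x * y ≡ -1 [ZMOD 4] ↔ x % 2 = 1 ∧ (x + y) % 4 = 0 := by
  unfold Int.ModEq
  rcases Int.even_or_odd' x with ⟨p, rfl | rfl⟩ <;> rcases Int.even_or_odd' y with ⟨q, rfl | rfl⟩ <;>
    ring_nf <;> omega

end TwoAdic

lemma D4_eq (a b c d : ℤ) :
    D4 a b c d = (a + b + c + d) * (a - b + c - d) * ((a - c) ^ 2 + (b - d) ^ 2) := by
  simp only [D4, Nat.succ_eq_add_one, Nat.reduceAdd, det_succ_row_zero, Int.reduceNeg, Fin.isValue,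
    of_apply, cons_val', cons_val_fin_one, cons_val_zero, submatrix_apply, Fin.succ_zero_eq_one,
    Fin.succAbove, cons_val_one, submatrix_submatrix, Function.comp_apply, Fin.succ_one_eq_two,
    cons_val, det_unique, Fin.default_eq_zero, Fin.reduceSucc, Fin.castSucc_zero, Fin.sum_univ_succ,
    Fin.coe_ofNat_eq_mod, Nat.zero_mod, pow_zero, one_mul, lt_self_iff_false, ↓reduceIte,
    Fin.castSucc_one, Finset.univ_unique, Fin.val_succ, Fin.val_eq_zero, zero_add, pow_one,
    Fin.castSucc_succ, neg_mul, Fin.succ_pos, Finset.sum_neg_distrib, Finset.sum_singleton,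
    not_lt_zero, Fin.reduceCastSucc, even_two, Even.neg_pow, one_pow, Fin.reduceLT, cons_val_succ,
    Fin.lt_one_iff, Fin.reduceEq, Int.reducePow]
  ring

lemma D4_mul (r a b c d : ℤ) : D4 (r * a) (r * b) (r * c) (r * d) = r ^ 4 * D4 a b c d := by
  simp only [D4_eq]
  ring

lemma odd_D4_of_odd_add {a b c d : ℤ} (h : Odd (a + b + c + d)) : Odd (D4 a b c d) := by
  rw [Int.odd_iff] at h
  rw [D4_eq]
  exact (Int.odd_iff.mpr h |>.mul (Int.odd_iff.mpr (by omega))).mul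
    (odd_sq_add_sq_of_odd_add (Int.odd_iff.mpr (by omega)))

lemma sixteen_dvd_D4_of_even_add {a b c d : ℤ} (h : Even (a + b + c + d)) : 16 ∣ D4 a b c d := by
  rw [Int.even_iff] at h
  rw [D4_eq]
  rcases Int.emod_two_eq (a + c) with hac | hac
  · have h4 := four_dvd_sq_add_sq (x := a - c) (y := b - d) (Int.even_iff.mpr (by omega))
      (Int.even_iff.mpr (by omega))
    exact show (2 * 2 * 4 : ℤ) ∣ _ from mul_dvd_mul (mul_dvd_mul (by omega) (by omega)) h4
  · have h8 := eight_dvd_mul_of_add_emod_four (x := a + b + c + d) (y := a - b + c - d)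
      (Int.even_iff.mpr h) (by omega)
    have h2 := even_sq_add_sq_of_even_add (x := a - c) (y := b - d) (Int.even_iff.mpr (by omega))
    exact show (8 * 2 : ℤ) ∣ _ from mul_dvd_mul h8 (even_iff_two_dvd.mp h2)

section Evaluations

variable {k l m n : ℤ}

lemma D4_two_mul_eq_two_pow_four_mul_odd (h : ¬ k + m ≡ l + n [ZMOD 2]) :
    ∃ t : ℤ, Odd t ∧ D4 (2 * k) (2 * l) (2 * m) (2 * n) = 2 ^ 4 * t := by
  unfold Int.ModEq at h
  exact ⟨D4 k l m n, odd_D4_of_odd_add (Int.odd_iff.mpr (by omega)), D4_mul 2 k l m n⟩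

lemma two_pow_eight_dvd_D4_two_mul (h : k + m ≡ l + n [ZMOD 2]) :
    (2 ^ 8 : ℤ) ∣ D4 (2 * k) (2 * l) (2 * m) (2 * n) := by
  unfold Int.ModEq at h
  rw [D4_mul, show (2 : ℤ) ^ 8 = 2 ^ 4 * 16 by norm_num]
  exact mul_dvd_mul_left _ (sixteen_dvd_D4_of_even_add (Int.even_iff.mpr (by omega)))

lemma D4_two_mul_add_one : D4 (2 * k + 1) (2 * l + 1) (2 * m + 1) (2 * n + 1) =
    2 ^ 4 * ((k + l + m + n + 2) * (k - l + m - n) * ((k - m) ^ 2 + (l - n) ^ 2)) := by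
  rw [D4_eq]
  ring

lemma D4_two_mul_add_one_eq_two_pow_four_mul_odd (h : ¬ k + m ≡ l + n [ZMOD 2]) :
    ∃ t : ℤ, Odd t ∧ D4 (2 * k + 1) (2 * l + 1) (2 * m + 1) (2 * n + 1) = 2 ^ 4 * t := by
  unfold Int.ModEq at h
  have hQ := odd_sq_add_sq_of_odd_add (x := k - m) (y := l - n) (Int.odd_iff.mpr (by omega))
  exact ⟨(k + l + m + n + 2) * (k - l + m - n) * ((k - m) ^ 2 + (l - n) ^ 2),
    ((Int.odd_iff.mpr (by omega)).mul (Int.odd_iff.mpr (by omega))).mul hQ, D4_two_mul_add_one⟩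

lemma D4_two_mul_add_one_eq_two_pow_seven_mul_odd (h : (k + m) * (l + n) ≡ -1 [ZMOD 4]) :
    ∃ t : ℤ, Odd t ∧ D4 (2 * k + 1) (2 * l + 1) (2 * m + 1) (2 * n + 1) = 2 ^ 7 * t := by
  obtain ⟨hS, hST⟩ := mul_modEq_neg_one_four_iff.mp h
  obtain ⟨p, hp, hp'⟩ := exists_odd_eq_two_mul_of_emod_four (x := k + l + m + n + 2) (by omega)
  obtain ⟨q, hq, hq'⟩ := exists_odd_eq_two_mul_of_emod_four (x := k - l + m - n) (by omega)
  obtain ⟨r, hr, hr'⟩ := exists_odd_sq_add_sq_eq_two_mul (x := k - m) (y := l - n)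
    (Int.odd_iff.mpr (by omega)) (Int.odd_iff.mpr (by omega))
  exact ⟨p * q * r, (hp.mul hq).mul hr, by rw [D4_two_mul_add_one, hp', hq', hr']; ring⟩

lemma two_pow_nine_dvd_D4_two_mul_add_one (h₁ : k + m ≡ l + n [ZMOD 2])
    (h₂ : ¬ (k + m) * (l + n) ≡ -1 [ZMOD 4]) :
    (2 ^ 9 : ℤ) ∣ D4 (2 * k + 1) (2 * l + 1) (2 * m + 1) (2 * n + 1) := by
  rw [mul_modEq_neg_one_four_iff] at h₂
  unfold Int.ModEq at h₁
  rw [D4_two_mul_add_one, show (2 : ℤ) ^ 9 = 2 ^ 4 * 32 by norm_num]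
  refine mul_dvd_mul_left _ ?_
  rcases Int.emod_two_eq (k + m) with hS | hS
  · have h8 := eight_dvd_mul_of_add_emod_four (x := k + l + m + n + 2) (y := k - l + m - n)
      (Int.even_iff.mpr (by omega)) (by omega)
    have h4 := four_dvd_sq_add_sq (x := k - m) (y := l - n) (Int.even_iff.mpr (by omega))
      (Int.even_iff.mpr (by omega))
    exact show (8 * 4 : ℤ) ∣ _ from mul_dvd_mul h8 h4
  · have h16 : (4 * 4 : ℤ) ∣ (k + l + m + n + 2) * (k - l + m - n) :=
      mul_dvd_mul (by omega) (by omega)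
    have h2 := even_sq_add_sq_of_even_add (x := k - m) (y := l - n) (Int.even_iff.mpr (by omega))
    exact show (16 * 2 : ℤ) ∣ _ from mul_dvd_mul h16 (even_iff_two_dvd.mp h2)

lemma D4_alternating : D4 (2 * k) (2 * l + 1) (2 * m) (2 * n + 1) =
    2 ^ 4 * ((k + l + m + n + 1) * (k - l + m - n - 1) * ((k - m) ^ 2 + (l - n) ^ 2)) := by
  rw [D4_eq]
  ring

lemma alternating_mul_modEq_three_iff :
    ((2 * k + 2 * l + 1) * (2 * m + 2 * n + 1) ≡ 3 [ZMOD 8] ∨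
        (2 * k + 2 * l + 1) * (2 * m + 2 * n + 1) ≡ -3 [ZMOD 8]) ↔
      ((k + l + m + n + 1) % 4 = 2 ∨ (k - m + (l - n)) % 4 = 2) := by
  rw [show (2 * k + 2 * l + 1) * (2 * m + 2 * n + 1) =
    (k + l + m + n + 1) ^ 2 - (k - m + (l - n)) ^ 2 by ring]
  exact sq_sub_sq_modEq_three_iff (Int.odd_iff.mpr (by omega))

lemma D4_alternating_eq_two_pow_five_mul_odd (h : k - m ≡ 1 [ZMOD 2] ∧ l - n ≡ 1 [ZMOD 2]) :
    ∃ t : ℤ, Odd t ∧ D4 (2 * k) (2 * l + 1) (2 * m) (2 * n + 1) = 2 ^ 5 * t := by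
  obtain ⟨hu, hv⟩ := h
  unfold Int.ModEq at hu hv
  obtain ⟨r, hr, hr'⟩ := exists_odd_sq_add_sq_eq_two_mul (x := k - m) (y := l - n)
    (Int.odd_iff.mpr (by omega)) (Int.odd_iff.mpr (by omega))
  refine ⟨(k + l + m + n + 1) * (k - l + m - n - 1) * r,
    ((Int.odd_iff.mpr (by omega)).mul (Int.odd_iff.mpr (by omega))).mul hr, ?_⟩
  rw [D4_alternating, hr']
  ring

lemma D4_alternating_eq_two_pow_six_mul_odd (h : k ≡ m [ZMOD 2] ∧
    ((2 * k + 2 * l + 1) * (2 * m + 2 * n + 1) ≡ 3 [ZMOD 8] ∨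
      (2 * k + 2 * l + 1) * (2 * m + 2 * n + 1) ≡ -3 [ZMOD 8])) :
    ∃ t : ℤ, Odd t ∧ D4 (2 * k) (2 * l + 1) (2 * m) (2 * n + 1) = 2 ^ 6 * t := by
  obtain ⟨hu, h⟩ := h
  rw [alternating_mul_modEq_three_iff] at h
  unfold Int.ModEq at hu
  rcases Int.emod_two_eq (l - n) with hv | hv
  · obtain ⟨r, hr, hr'⟩ := exists_odd_sq_add_sq_eq_four_mul (x := k - m) (y := l - n)
      (Int.even_iff.mpr (by omega)) (by omega)
    refine ⟨(k + l + m + n + 1) * (k - l + m - n - 1) * r,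
      ((Int.odd_iff.mpr (by omega)).mul (Int.odd_iff.mpr (by omega))).mul hr, ?_⟩
    rw [D4_alternating, hr']
    ring
  · obtain ⟨p, hp, hp'⟩ := exists_odd_eq_two_mul_of_emod_four (x := k + l + m + n + 1) (by omega)
    obtain ⟨q, hq, hq'⟩ := exists_odd_eq_two_mul_of_emod_four (x := k - l + m - n - 1) (by omega)
    have hQ := odd_sq_add_sq_of_odd_add (x := k - m) (y := l - n) (Int.odd_iff.mpr (by omega))
    exact ⟨p * q * ((k - m) ^ 2 + (l - n) ^ 2), (hp.mul hq).mul hQ, by rw [D4_alternating, hp', hq']; ring⟩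

lemma two_pow_seven_dvd_D4_alternating (h₁ : ¬ (k - m ≡ 1 [ZMOD 2] ∧ l - n ≡ 1 [ZMOD 2]))
    (h₂ : ¬ (k ≡ m [ZMOD 2] ∧
      ((2 * k + 2 * l + 1) * (2 * m + 2 * n + 1) ≡ 3 [ZMOD 8] ∨
        (2 * k + 2 * l + 1) * (2 * m + 2 * n + 1) ≡ -3 [ZMOD 8]))) :
    (2 ^ 7 : ℤ) ∣ D4 (2 * k) (2 * l + 1) (2 * m) (2 * n + 1) := by
  rw [alternating_mul_modEq_three_iff] at h₂
  unfold Int.ModEq at h₁ h₂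
  rw [D4_alternating, show (2 : ℤ) ^ 7 = 2 ^ 4 * 8 by norm_num]
  refine mul_dvd_mul_left _ ?_
  rcases Int.emod_two_eq (k - m) with hu | hu <;> rcases Int.emod_two_eq (l - n) with hv | hv
  · exact dvd_mul_of_dvd_right (eight_dvd_sq_add_sq (Int.even_iff.mpr (by omega)) (by omega)) _
  · have h16 : (4 * 4 : ℤ) ∣ (k + l + m + n + 1) * (k - l + m - n - 1) :=
      mul_dvd_mul (by omega) (by omega)
    exact dvd_mul_of_dvd_left ((show (8 : ℤ) ∣ 4 * 4 by norm_num).trans h16) _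
  · exact dvd_mul_of_dvd_left
      (eight_dvd_mul_of_add_emod_four (Int.even_iff.mpr (by omega)) (by omega)) _
  · omega

lemma D4_paired : D4 (2 * k) (2 * l) (2 * m + 1) (2 * n + 1) =
    2 ^ 2 * ((k + l + m + n + 1) * (k - l + m - n) *
      ((2 * (k - m) - 1) ^ 2 + (2 * (l - n) - 1) ^ 2)) := by
  rw [D4_eq]
  ring

lemma paired_mul_modEq_three_iff :
    ((2 * k + 2 * m + 1) * (2 * l + 2 * n + 1) ≡ 3 [ZMOD 8] ∨
        (2 * k + 2 * m + 1) * (2 * l + 2 * n + 1) ≡ -3 [ZMOD 8]) ↔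
      ((k + l + m + n + 1) % 4 = 2 ∨ (k - l + m - n) % 4 = 2) := by
  rw [show (2 * k + 2 * m + 1) * (2 * l + 2 * n + 1) =
    (k + l + m + n + 1) ^ 2 - (k - l + m - n) ^ 2 by ring]
  exact sq_sub_sq_modEq_three_iff (Int.odd_iff.mpr (by omega))

lemma D4_paired_eq_two_pow_four_mul_odd
    (h : (2 * k + 2 * m + 1) * (2 * l + 2 * n + 1) ≡ 3 [ZMOD 8] ∨
      (2 * k + 2 * m + 1) * (2 * l + 2 * n + 1) ≡ -3 [ZMOD 8]) :
    ∃ t : ℤ, Odd t ∧ D4 (2 * k) (2 * l) (2 * m + 1) (2 * n + 1) = 2 ^ 4 * t := by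
  rw [paired_mul_modEq_three_iff] at h
  obtain ⟨r, hr, hr'⟩ := exists_odd_sq_add_sq_eq_two_mul (x := 2 * (k - m) - 1) (y := 2 * (l - n) - 1)
    (Int.odd_iff.mpr (by omega)) (Int.odd_iff.mpr (by omega))
  rcases h with hX | hY
  · obtain ⟨p, hp, hp'⟩ := exists_odd_eq_two_mul_of_emod_four hX
    exact ⟨p * (k - l + m - n) * r, (hp.mul (Int.odd_iff.mpr (by omega))).mul hr,
      by rw [D4_paired, hp', hr']; ring⟩
  · obtain ⟨q, hq, hq'⟩ := exists_odd_eq_two_mul_of_emod_four hY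
    exact ⟨(k + l + m + n + 1) * q * r, ((Int.odd_iff.mpr (by omega)).mul hq).mul hr,
      by rw [D4_paired, hq', hr']; ring⟩

lemma two_pow_five_dvd_D4_paired
    (h : (2 * k + 2 * m + 1) * (2 * l + 2 * n + 1) ≡ 1 [ZMOD 8] ∨
      (2 * k + 2 * m + 1) * (2 * l + 2 * n + 1) ≡ -1 [ZMOD 8]) :
    (2 ^ 5 : ℤ) ∣ D4 (2 * k) (2 * l) (2 * m + 1) (2 * n + 1) := by
  have h' : ¬ ((k + l + m + n + 1) % 4 = 2 ∨ (k - l + m - n) % 4 = 2) := by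
    rw [← paired_mul_modEq_three_iff]
    unfold Int.ModEq at h ⊢
    omega
  have h4 : 4 ∣ (k + l + m + n + 1) * (k - l + m - n) := by
    rcases Int.emod_two_eq (k + l + m + n + 1) with hX | hX
    · exact dvd_mul_of_dvd_left (by omega) _
    · exact dvd_mul_of_dvd_right (by omega) _
  have h2 := even_sq_add_sq_of_even_add (x := 2 * (k - m) - 1) (y := 2 * (l - n) - 1)
    (Int.even_iff.mpr (by omega))
  rw [D4_paired, show (2 : ℤ) ^ 5 = 2 ^ 2 * (4 * 2) by norm_num]
  exact mul_dvd_mul_left _ (mul_dvd_mul h4 (even_iff_two_dvd.mp h2))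

end Evaluations

theorem stmt7 (k l m n : ℤ) :
    ((¬ (k + m ≡ l + n [ZMOD 2]) →
        ∃ t : ℤ, Odd t ∧ D4 (2 * k) (2 * l) (2 * m) (2 * n) = 2 ^ 4 * t) ∧
      ((k + m ≡ l + n [ZMOD 2]) → (2 ^ 8 : ℤ) ∣ D4 (2 * k) (2 * l) (2 * m) (2 * n))) ∧
    ((¬ (k + m ≡ l + n [ZMOD 2]) →
        ∃ t : ℤ, Odd t ∧ D4 (2 * k + 1) (2 * l + 1) (2 * m + 1) (2 * n + 1) = 2 ^ 4 * t) ∧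
      (((k + m) * (l + n) ≡ -1 [ZMOD 4]) →
        ∃ t : ℤ, Odd t ∧ D4 (2 * k + 1) (2 * l + 1) (2 * m + 1) (2 * n + 1) = 2 ^ 7 * t) ∧
      ((k + m ≡ l + n [ZMOD 2]) → ¬ ((k + m) * (l + n) ≡ -1 [ZMOD 4]) →
        (2 ^ 9 : ℤ) ∣ D4 (2 * k + 1) (2 * l + 1) (2 * m + 1) (2 * n + 1))) ∧
    (((k - m ≡ 1 [ZMOD 2] ∧ l - n ≡ 1 [ZMOD 2]) →
        ∃ t : ℤ, Odd t ∧ D4 (2 * k) (2 * l + 1) (2 * m) (2 * n + 1) = 2 ^ 5 * t) ∧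
      ((k ≡ m [ZMOD 2] ∧
          ((2 * k + 2 * l + 1) * (2 * m + 2 * n + 1) ≡ 3 [ZMOD 8] ∨
            (2 * k + 2 * l + 1) * (2 * m + 2 * n + 1) ≡ -3 [ZMOD 8])) →
        ∃ t : ℤ, Odd t ∧ D4 (2 * k) (2 * l + 1) (2 * m) (2 * n + 1) = 2 ^ 6 * t) ∧
      (¬ (k - m ≡ 1 [ZMOD 2] ∧ l - n ≡ 1 [ZMOD 2]) →
        ¬ (k ≡ m [ZMOD 2] ∧
            ((2 * k + 2 * l + 1) * (2 * m + 2 * n + 1) ≡ 3 [ZMOD 8] ∨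
              (2 * k + 2 * l + 1) * (2 * m + 2 * n + 1) ≡ -3 [ZMOD 8])) →
        (2 ^ 7 : ℤ) ∣ D4 (2 * k) (2 * l + 1) (2 * m) (2 * n + 1))) ∧
    ((((2 * k + 2 * m + 1) * (2 * l + 2 * n + 1) ≡ 3 [ZMOD 8] ∨
          (2 * k + 2 * m + 1) * (2 * l + 2 * n + 1) ≡ -3 [ZMOD 8]) →
        ∃ t : ℤ, Odd t ∧ D4 (2 * k) (2 * l) (2 * m + 1) (2 * n + 1) = 2 ^ 4 * t) ∧
      (((2 * k + 2 * m + 1) * (2 * l + 2 * n + 1) ≡ 1 [ZMOD 8] ∨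
          (2 * k + 2 * m + 1) * (2 * l + 2 * n + 1) ≡ -1 [ZMOD 8]) →
        (2 ^ 5 : ℤ) ∣ D4 (2 * k) (2 * l) (2 * m + 1) (2 * n + 1))) :=
  ⟨⟨D4_two_mul_eq_two_pow_four_mul_odd, two_pow_eight_dvd_D4_two_mul⟩,
    ⟨D4_two_mul_add_one_eq_two_pow_four_mul_odd, D4_two_mul_add_one_eq_two_pow_seven_mul_odd,
      two_pow_nine_dvd_D4_two_mul_add_one⟩,
    ⟨D4_alternating_eq_two_pow_five_mul_odd, D4_alternating_eq_two_pow_six_mul_odd,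
      two_pow_seven_dvd_D4_alternating⟩,
    D4_paired_eq_two_pow_four_mul_odd, two_pow_five_dvd_D4_paired⟩
end

section
/- With the notation below, if b_0+b_2 ≢ b_1+b_3 (mod 2), then ββ̄ − γγ̄ ≡ 4(b_0b_2 + b_1b_3 + c_0c_2 + c_1c_3) (mod 16). -/
open Matrix Complex

set_option maxHeartbeats 2000000
set_option maxRecDepth 100000

noncomputable def alphaD (d : ℕ → ℤ) (i : ℕ) : ℂ := (d i : ℂ) + Complex.I * (d (i + 4) : ℂ)

noncomputable def betaD (d : ℕ → ℤ) : ℂ :=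
  (alphaD d 0 + alphaD d 2) ^ 2 - (alphaD d 1 + alphaD d 3) ^ 2

noncomputable def gammaD (d : ℕ → ℤ) : ℂ :=
  (alphaD d 0 - alphaD d 2) ^ 2 + (alphaD d 1 - alphaD d 3) ^ 2

/-- Key integer polynomial: `|β|² - |γ|² - 8(d0d2+d1d3+d4d6+d5d7)` in the `d` variables. -/
def Fpoly (d0 d1 d2 d3 d4 d5 d6 d7 : ℤ) : ℤ :=
  ((d0+d2)^2 - (d4+d6)^2 - (d1+d3)^2 + (d5+d7)^2)^2
    + 4*((d0+d2)*(d4+d6) - (d1+d3)*(d5+d7))^2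
  - (((d0-d2)^2 - (d4-d6)^2 + (d1-d3)^2 - (d5-d7)^2)^2
    + 4*((d0-d2)*(d4-d6) + (d1-d3)*(d5-d7))^2)
  - 8*(d0*d2 + d1*d3 + d4*d6 + d5*d7)

lemma Fstep (q0 q1 q2 q3 q4 q5 q6 q7 r0 r1 r2 r3 r4 r5 r6 r7 : ℤ) :
    Fpoly (2*q0+r0) (2*q1+r1) (2*q2+r2) (2*q3+r3) (2*q4+r4) (2*q5+r5) (2*q6+r6) (2*q7+r7)
      = Fpoly r0 r1 r2 r3 r4 r5 r6 r7 + 16 * ((-1) * q7*r6^2*r7 + (-1) * q7*r5 + (3) * q7*r5*r7^2 + (1) * q7*r5^3 + (-2) * q7*r4*r5*r6 + (-1) * q7*r4^2*r7 + (1) * q7*r3^2*r5 + (-2) * q7*r2*r3*r6 + (1) * q7*r2^2*r7 + (2) * q7*r1*r3*r7 + (-2) * q7*r1*r2*r4 + (1) * q7*r1^2*r5 + (-2) * q7*r0*r3*r4 + (2) * q7*r0*r2*r5 + (-2) * q7*r0*r1*r6 + (1) * q7*r0^2*r7 + (-1) * q7^2*r6^2 + (6) * q7^2*r5*r7 + (-1)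 * q7^2*r4^2 + (1) * q7^2*r2^2 + (2) * q7^2*r1*r3 + (1) * q7^2*r0^2 + (4) * q7^3*r5 + (-1) * q6*r6*r7^2 + (-1) * q6*r5^2*r6 + (-1) * q6*r4 + (3) * q6*r4*r6^2 + (-2) * q6*r4*r5*r7 + (1) * q6*r4^3 + (1) * q6*r3^2*r6 + (-2) * q6*r2*r3*r7 + (1) * q6*r2^2*r4 + (2) * q6*r1*r3*r4 + (-2) * q6*r1*r2*r5 + (1) * q6*r1^2*r6 + (-2) * q6*r0*r3*r5 + (2) * q6*r0*r2*r6 + (-2) * q6*r0*r1*r7 + (1) * q6*r0^2*r4 + (-4) * q6*q7*r6*r7 + (-4) * q6*q7*r4*r5 + (-4) * q6*q7*r2*r3 + (-4) * q6*q7*r0*r1 + (-4) * q6*q7^2*r6 + (-1) * q6^2*r7^2 + (-1) * q6^2*r5^2 + (6) * q6^2*r4*r6 + (1) * q6^2*r3^2 + (1) * q6^2*r1^2 + (2) * q6^2*r0*r2 + (-4) * q6^2*q7*r7 + (-4) * q6^2*q7^2 + (4) * q6^3*r4 + (-1) * q5*r7 + (1) * q5*r7^3 + (-1) * q5*r5*r6^2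 + (3) * q5*r5^2*r7 + (-2) * q5*r4*r6*r7 + (-1) * q5*r4^2*r5 + (1) * q5*r3^2*r7 + (-2) * q5*r2*r3*r4 + (1) * q5*r2^2*r5 + (2) * q5*r1*r3*r5 + (-2) * q5*r1*r2*r6 + (1) * q5*r1^2*r7 + (-2) * q5*r0*r3*r6 + (2) * q5*r0*r2*r7 + (-2) * q5*r0*r1*r4 + (1) * q5*r0^2*r5 + (-2) * q5*q7 + (6) * q5*q7*r7^2 + (6) * q5*q7*r5^2 + (-4) * q5*q7*r4*r6 + (2) * q5*q7*r3^2 + (2) * q5*q7*r1^2 + (4) * q5*q7*r0*r2 + (12) * q5*q7^2*r7 + (8) * q5*q7^3 + (-4) * q5*q6*r5*r6 + (-4) * q5*q6*r4*r7 + (-4) * q5*q6*r1*r2 + (-4) * q5*q6*r0*r3 + (-8) * q5*q6*q7*r4 + (-4) * q5*q6^2*r5 + (-1) * q5^2*r6^2 + (6) * q5^2*r5*r7 + (-1) * q5^2*r4^2 + (1) * q5^2*r2^2 + (2) * q5^2*r1*r3 + (1) * q5^2*r0^2 + (12) * q5^2*q7*r5 + (-4) * q5^2*q6*r6 + (-4)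 * q5^2*q6^2 + (4) * q5^3*r7 + (8) * q5^3*q7 + (-1) * q4*r6 + (1) * q4*r6^3 + (-2) * q4*r5*r6*r7 + (-1) * q4*r4*r7^2 + (-1) * q4*r4*r5^2 + (3) * q4*r4^2*r6 + (1) * q4*r3^2*r4 + (-2) * q4*r2*r3*r5 + (1) * q4*r2^2*r6 + (2) * q4*r1*r3*r6 + (-2) * q4*r1*r2*r7 + (1) * q4*r1^2*r4 + (-2) * q4*r0*r3*r7 + (2) * q4*r0*r2*r4 + (-2) * q4*r0*r1*r5 + (1) * q4*r0^2*r6 + (-4) * q4*q7*r5*r6 + (-4) * q4*q7*r4*r7 + (-4) * q4*q7*r1*r2 + (-4) * q4*q7*r0*r3 + (-4) * q4*q7^2*r4 + (-2) * q4*q6 + (6) * q4*q6*r6^2 + (-4) * q4*q6*r5*r7 + (6) * q4*q6*r4^2 + (2) * q4*q6*r2^2 + (4) * q4*q6*r1*r3 + (2) * q4*q6*r0^2 + (-8) * q4*q6*q7*r5 + (12) * q4*q6^2*r6 + (8) * q4*q6^3 + (-4) * q4*q5*r6*r7 + (-4) * q4*q5*r4*r5 + (-4) * q4*q5*r2*r3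 + (-4) * q4*q5*r0*r1 + (-8) * q4*q5*q7*r6 + (-8) * q4*q5*q6*r7 + (-16) * q4*q5*q6*q7 + (-4) * q4*q5^2*r4 + (-1) * q4^2*r7^2 + (-1) * q4^2*r5^2 + (6) * q4^2*r4*r6 + (1) * q4^2*r3^2 + (1) * q4^2*r1^2 + (2) * q4^2*r0*r2 + (-4) * q4^2*q7*r7 + (-4) * q4^2*q7^2 + (12) * q4^2*q6*r4 + (-4) * q4^2*q5*r5 + (-4) * q4^2*q5^2 + (4) * q4^3*r6 + (8) * q4^3*q6 + (1) * q3*r3*r6^2 + (2) * q3*r3*r5*r7 + (1) * q3*r3*r4^2 + (-2) * q3*r2*r6*r7 + (-2) * q3*r2*r4*r5 + (-1) * q3*r2^2*r3 + (-1) * q3*r1 + (1) * q3*r1*r7^2 + (1) * q3*r1*r5^2 + (2) * q3*r1*r4*r6 + (3) * q3*r1*r3^2 + (1) * q3*r1^3 + (-2) * q3*r0*r5*r6 + (-2) * q3*r0*r4*r7 + (-2) * q3*r0*r1*r2 + (-1) * q3*r0^2*r3 + (4) * q3*q7*r3*r5 + (-4) * q3*q7*r2*r6 + (4) * q3*q7*r1*r7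 + (-4) * q3*q7*r0*r4 + (4) * q3*q7^2*r1 + (4) * q3*q6*r3*r6 + (-4) * q3*q6*r2*r7 + (4) * q3*q6*r1*r4 + (-4) * q3*q6*r0*r5 + (-8) * q3*q6*q7*r2 + (4) * q3*q6^2*r3 + (4) * q3*q5*r3*r7 + (-4) * q3*q5*r2*r4 + (4) * q3*q5*r1*r5 + (-4) * q3*q5*r0*r6 + (8) * q3*q5*q7*r3 + (-8) * q3*q5*q6*r0 + (4) * q3*q5^2*r1 + (4) * q3*q4*r3*r4 + (-4) * q3*q4*r2*r5 + (4) * q3*q4*r1*r6 + (-4) * q3*q4*r0*r7 + (-8) * q3*q4*q7*r0 + (8) * q3*q4*q6*r1 + (-8) * q3*q4*q5*r2 + (4) * q3*q4^2*r3 + (1) * q3^2*r6^2 + (2) * q3^2*r5*r7 + (1) * q3^2*r4^2 + (-1) * q3^2*r2^2 + (6) * q3^2*r1*r3 + (-1) * q3^2*r0^2 + (4) * q3^2*q7*r5 + (4) * q3^2*q6*r6 + (4) * q3^2*q6^2 + (4) * q3^2*q5*r7 + (8) * q3^2*q5*q7 + (4) * q3^2*q4*r4 + (4) * q3^2*q4^2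 + (4) * q3^3*r1 + (-2) * q2*r3*r6*r7 + (-2) * q2*r3*r4*r5 + (1) * q2*r2*r7^2 + (1) * q2*r2*r5^2 + (2) * q2*r2*r4*r6 + (-1) * q2*r2*r3^2 + (-2) * q2*r1*r5*r6 + (-2) * q2*r1*r4*r7 + (-1) * q2*r1^2*r2 + (-1) * q2*r0 + (1) * q2*r0*r6^2 + (2) * q2*r0*r5*r7 + (1) * q2*r0*r4^2 + (3) * q2*r0*r2^2 + (-2) * q2*r0*r1*r3 + (1) * q2*r0^3 + (-4) * q2*q7*r3*r6 + (4) * q2*q7*r2*r7 + (-4) * q2*q7*r1*r4 + (4) * q2*q7*r0*r5 + (4) * q2*q7^2*r2 + (-4) * q2*q6*r3*r7 + (4) * q2*q6*r2*r4 + (-4) * q2*q6*r1*r5 + (4) * q2*q6*r0*r6 + (-8) * q2*q6*q7*r3 + (4) * q2*q6^2*r0 + (-4) * q2*q5*r3*r4 + (4) * q2*q5*r2*r5 + (-4) * q2*q5*r1*r6 + (4) * q2*q5*r0*r7 + (8) * q2*q5*q7*r0 + (-8) * q2*q5*q6*r1 + (4) * q2*q5^2*r2 + (-4) * q2*q4*r3*r5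 + (4) * q2*q4*r2*r6 + (-4) * q2*q4*r1*r7 + (4) * q2*q4*r0*r4 + (-8) * q2*q4*q7*r1 + (8) * q2*q4*q6*r2 + (-8) * q2*q4*q5*r3 + (4) * q2*q4^2*r0 + (-4) * q2*q3*r6*r7 + (-4) * q2*q3*r4*r5 + (-4) * q2*q3*r2*r3 + (-4) * q2*q3*r0*r1 + (-8) * q2*q3*q7*r6 + (-8) * q2*q3*q6*r7 + (-16) * q2*q3*q6*q7 + (-8) * q2*q3*q5*r4 + (-8) * q2*q3*q4*r5 + (-16) * q2*q3*q4*q5 + (-4) * q2*q3^2*r2 + (1) * q2^2*r7^2 + (1) * q2^2*r5^2 + (2) * q2^2*r4*r6 + (-1) * q2^2*r3^2 + (-1) * q2^2*r1^2 + (6) * q2^2*r0*r2 + (4) * q2^2*q7*r7 + (4) * q2^2*q7^2 + (4) * q2^2*q6*r4 + (4) * q2^2*q5*r5 + (4) * q2^2*q5^2 + (4) * q2^2*q4*r6 + (8) * q2^2*q4*q6 + (-4) * q2^2*q3*r3 + (-4) * q2^2*q3^2 + (4) * q2^3*r0 + (-1) * q1*r3 + (1) * q1*r3*r7^2 + (1)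 * q1*r3*r5^2 + (2) * q1*r3*r4*r6 + (1) * q1*r3^3 + (-2) * q1*r2*r5*r6 + (-2) * q1*r2*r4*r7 + (1) * q1*r1*r6^2 + (2) * q1*r1*r5*r7 + (1) * q1*r1*r4^2 + (-1) * q1*r1*r2^2 + (3) * q1*r1^2*r3 + (-2) * q1*r0*r6*r7 + (-2) * q1*r0*r4*r5 + (-2) * q1*r0*r2*r3 + (-1) * q1*r0^2*r1 + (4) * q1*q7*r3*r7 + (-4) * q1*q7*r2*r4 + (4) * q1*q7*r1*r5 + (-4) * q1*q7*r0*r6 + (4) * q1*q7^2*r3 + (4) * q1*q6*r3*r4 + (-4) * q1*q6*r2*r5 + (4) * q1*q6*r1*r6 + (-4) * q1*q6*r0*r7 + (-8) * q1*q6*q7*r0 + (4) * q1*q6^2*r1 + (4) * q1*q5*r3*r5 + (-4) * q1*q5*r2*r6 + (4) * q1*q5*r1*r7 + (-4) * q1*q5*r0*r4 + (8) * q1*q5*q7*r1 + (-8) * q1*q5*q6*r2 + (4) * q1*q5^2*r3 + (4) * q1*q4*r3*r6 + (-4) * q1*q4*r2*r7 + (4) * q1*q4*r1*r4 + (-4)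 * q1*q4*r0*r5 + (-8) * q1*q4*q7*r2 + (8) * q1*q4*q6*r3 + (-8) * q1*q4*q5*r0 + (4) * q1*q4^2*r1 + (-2) * q1*q3 + (2) * q1*q3*r7^2 + (2) * q1*q3*r5^2 + (4) * q1*q3*r4*r6 + (6) * q1*q3*r3^2 + (6) * q1*q3*r1^2 + (-4) * q1*q3*r0*r2 + (8) * q1*q3*q7*r7 + (8) * q1*q3*q7^2 + (8) * q1*q3*q6*r4 + (8) * q1*q3*q5*r5 + (8) * q1*q3*q5^2 + (8) * q1*q3*q4*r6 + (16) * q1*q3*q4*q6 + (12) * q1*q3^2*r3 + (8) * q1*q3^3 + (-4) * q1*q2*r5*r6 + (-4) * q1*q2*r4*r7 + (-4) * q1*q2*r1*r2 + (-4) * q1*q2*r0*r3 + (-8) * q1*q2*q7*r4 + (-8) * q1*q2*q6*r5 + (-8) * q1*q2*q5*r6 + (-16) * q1*q2*q5*q6 + (-8) * q1*q2*q4*r7 + (-16) * q1*q2*q4*q7 + (-8) * q1*q2*q3*r0 + (-4) * q1*q2^2*r1 + (1) * q1^2*r6^2 + (2) * q1^2*r5*r7 + (1) * q1^2*r4^2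 + (-1) * q1^2*r2^2 + (6) * q1^2*r1*r3 + (-1) * q1^2*r0^2 + (4) * q1^2*q7*r5 + (4) * q1^2*q6*r6 + (4) * q1^2*q6^2 + (4) * q1^2*q5*r7 + (8) * q1^2*q5*q7 + (4) * q1^2*q4*r4 + (4) * q1^2*q4^2 + (12) * q1^2*q3*r1 + (-4) * q1^2*q2*r2 + (-4) * q1^2*q2^2 + (4) * q1^3*r3 + (8) * q1^3*q3 + (-2) * q0*r3*r5*r6 + (-2) * q0*r3*r4*r7 + (-1) * q0*r2 + (1) * q0*r2*r6^2 + (2) * q0*r2*r5*r7 + (1) * q0*r2*r4^2 + (1) * q0*r2^3 + (-2) * q0*r1*r6*r7 + (-2) * q0*r1*r4*r5 + (-2) * q0*r1*r2*r3 + (1) * q0*r0*r7^2 + (1) * q0*r0*r5^2 + (2) * q0*r0*r4*r6 + (-1) * q0*r0*r3^2 + (-1) * q0*r0*r1^2 + (3) * q0*r0^2*r2 + (-4) * q0*q7*r3*r4 + (4) * q0*q7*r2*r5 + (-4) * q0*q7*r1*r6 + (4) * q0*q7*r0*r7 + (4) * q0*q7^2*r0 + (-4) * q0*q6*r3*r5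 + (4) * q0*q6*r2*r6 + (-4) * q0*q6*r1*r7 + (4) * q0*q6*r0*r4 + (-8) * q0*q6*q7*r1 + (4) * q0*q6^2*r2 + (-4) * q0*q5*r3*r6 + (4) * q0*q5*r2*r7 + (-4) * q0*q5*r1*r4 + (4) * q0*q5*r0*r5 + (8) * q0*q5*q7*r2 + (-8) * q0*q5*q6*r3 + (4) * q0*q5^2*r0 + (-4) * q0*q4*r3*r7 + (4) * q0*q4*r2*r4 + (-4) * q0*q4*r1*r5 + (4) * q0*q4*r0*r6 + (-8) * q0*q4*q7*r3 + (8) * q0*q4*q6*r0 + (-8) * q0*q4*q5*r1 + (4) * q0*q4^2*r2 + (-4) * q0*q3*r5*r6 + (-4) * q0*q3*r4*r7 + (-4) * q0*q3*r1*r2 + (-4) * q0*q3*r0*r3 + (-8) * q0*q3*q7*r4 + (-8) * q0*q3*q6*r5 + (-8) * q0*q3*q5*r6 + (-16) * q0*q3*q5*q6 + (-8) * q0*q3*q4*r7 + (-16) * q0*q3*q4*q7 + (-4) * q0*q3^2*r0 + (-2) * q0*q2 + (2) * q0*q2*r6^2 + (4) * q0*q2*r5*r7 + (2) * q0*q2*r4^2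 + (6) * q0*q2*r2^2 + (-4) * q0*q2*r1*r3 + (6) * q0*q2*r0^2 + (8) * q0*q2*q7*r5 + (8) * q0*q2*q6*r6 + (8) * q0*q2*q6^2 + (8) * q0*q2*q5*r7 + (16) * q0*q2*q5*q7 + (8) * q0*q2*q4*r4 + (8) * q0*q2*q4^2 + (-8) * q0*q2*q3*r1 + (12) * q0*q2^2*r2 + (8) * q0*q2^3 + (-4) * q0*q1*r6*r7 + (-4) * q0*q1*r4*r5 + (-4) * q0*q1*r2*r3 + (-4) * q0*q1*r0*r1 + (-8) * q0*q1*q7*r6 + (-8) * q0*q1*q6*r7 + (-16) * q0*q1*q6*q7 + (-8) * q0*q1*q5*r4 + (-8) * q0*q1*q4*r5 + (-16) * q0*q1*q4*q5 + (-8) * q0*q1*q3*r2 + (-8) * q0*q1*q2*r3 + (-16) * q0*q1*q2*q3 + (-4) * q0*q1^2*r0 + (1) * q0^2*r7^2 + (1) * q0^2*r5^2 + (2) * q0^2*r4*r6 + (-1) * q0^2*r3^2 + (-1) * q0^2*r1^2 + (6) * q0^2*r0*r2 + (4) * q0^2*q7*r7 + (4) * q0^2*q7^2 + (4) * q0^2*q6*r4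 + (4) * q0^2*q5*r5 + (4) * q0^2*q5^2 + (4) * q0^2*q4*r6 + (8) * q0^2*q4*q6 + (-4) * q0^2*q3*r3 + (-4) * q0^2*q3^2 + (12) * q0^2*q2*r0 + (-4) * q0^2*q1*r1 + (-4) * q0^2*q1^2 + (4) * q0^3*r2 + (8) * q0^3*q2) := by
  simp only [Fpoly]; ring

lemma Fkey (d0 d1 d2 d3 d4 d5 d6 d7 : ℤ)
    (h : ¬ (2:ℤ) ∣ (d0+d1+d2+d3+d4+d5+d6+d7)) :
    (16:ℤ) ∣ Fpoly d0 d1 d2 d3 d4 d5 d6 d7 := by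
  have hd0 : d0 = 2*(d0/2) + d0 % 2 := by omega
  have hd1 : d1 = 2*(d1/2) + d1 % 2 := by omega
  have hd2 : d2 = 2*(d2/2) + d2 % 2 := by omega
  have hd3 : d3 = 2*(d3/2) + d3 % 2 := by omega
  have hd4 : d4 = 2*(d4/2) + d4 % 2 := by omega
  have hd5 : d5 = 2*(d5/2) + d5 % 2 := by omega
  have hd6 : d6 = 2*(d6/2) + d6 % 2 := by omega
  have hd7 : d7 = 2*(d7/2) + d7 % 2 := by omega
  rw [hd0, hd1, hd2, hd3, hd4, hd5, hd6, hd7, Fstep]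
  refine dvd_add ?_ (dvd_mul_right 16 _)
  have h0 : d0 % 2 = 0 ∨ d0 % 2 = 1 := by omega
  have h1 : d1 % 2 = 0 ∨ d1 % 2 = 1 := by omega
  have h2 : d2 % 2 = 0 ∨ d2 % 2 = 1 := by omega
  have h3 : d3 % 2 = 0 ∨ d3 % 2 = 1 := by omega
  have h4 : d4 % 2 = 0 ∨ d4 % 2 = 1 := by omega
  have h5 : d5 % 2 = 0 ∨ d5 % 2 = 1 := by omega
  have h6 : d6 % 2 = 0 ∨ d6 % 2 = 1 := by omega
  have h7 : d7 % 2 = 0 ∨ d7 % 2 = 1 := by omega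
  have hodd : ¬ (2:ℤ) ∣ (d0%2 + d1%2 + d2%2 + d3%2 + d4%2 + d5%2 + d6%2 + d7%2) := by
    omega
  rcases h0 with h0|h0 <;> rcases h1 with h1|h1 <;> rcases h2 with h2|h2 <;>
    rcases h3 with h3|h3 <;> rcases h4 with h4|h4 <;> rcases h5 with h5|h5 <;>
    rcases h6 with h6|h6 <;> rcases h7 with h7|h7 <;>
    rw [h0, h1, h2, h3, h4, h5, h6, h7] at hodd ⊢ <;>
    first
      | (exact absurd (by decide) hodd)
      | decide

lemma mulConjEq (x y : ℤ) :
    ((x:ℂ) + Complex.I * (y:ℂ)) * (starRingEnd ℂ) ((x:ℂ) + Complex.I * (y:ℂ))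
      = ((x^2 + y^2 : ℤ) : ℂ) := by
  simp only [map_add, _root_.map_mul, Complex.conj_I, map_intCast]
  push_cast
  linear_combination (-(y:ℂ)^2) * Complex.I_sq

theorem stmt13 (a : ℕ → ℤ) (B G : ℤ)
    (hB : (B : ℂ) = betaD (dd a) * (starRingEnd ℂ) (betaD (dd a)))
    (hG : (G : ℂ) = gammaD (dd a) * (starRingEnd ℂ) (gammaD (dd a)))
    (h : ¬ (bI a 0 + bI a 2 ≡ bI a 1 + bI a 3 [ZMOD 2])) :
    B - G ≡ 4 * (bI a 0 * bI a 2 + bI a 1 * bI a 3 + cI a 0 * cI a 2 + cI a 1 * cI a 3) [ZMOD 16] := by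
  have hbeta : betaD (dd a) =
      ((((a 0 - a 8)+(a 2 - a 10))^2 - ((a 4 - a 12)+(a 6 - a 14))^2
        - ((a 1 - a 9)+(a 3 - a 11))^2 + ((a 5 - a 13)+(a 7 - a 15))^2 : ℤ) : ℂ)
      + Complex.I * ((2*(((a 0 - a 8)+(a 2 - a 10))*((a 4 - a 12)+(a 6 - a 14))
        - ((a 1 - a 9)+(a 3 - a 11))*((a 5 - a 13)+(a 7 - a 15))) : ℤ) : ℂ) := by
    simp only [betaD, alphaD, dd]
    norm_num
    linear_combination ((((a 4:ℂ) - a 12)+((a 6:ℂ) - a 14))^2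
      - (((a 5:ℂ) - a 13)+((a 7:ℂ) - a 15))^2) * Complex.I_sq
  have hgamma : gammaD (dd a) =
      ((((a 0 - a 8)-(a 2 - a 10))^2 - ((a 4 - a 12)-(a 6 - a 14))^2
        + ((a 1 - a 9)-(a 3 - a 11))^2 - ((a 5 - a 13)-(a 7 - a 15))^2 : ℤ) : ℂ)
      + Complex.I * ((2*(((a 0 - a 8)-(a 2 - a 10))*((a 4 - a 12)-(a 6 - a 14))
        + ((a 1 - a 9)-(a 3 - a 11))*((a 5 - a 13)-(a 7 - a 15))) : ℤ) : ℂ) := by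
    simp only [gammaD, alphaD, dd]
    norm_num
    linear_combination ((((a 4:ℂ) - a 12)-((a 6:ℂ) - a 14))^2
      + (((a 5:ℂ) - a 13)-((a 7:ℂ) - a 15))^2) * Complex.I_sq
  have hBval : B = (((a 0 - a 8)+(a 2 - a 10))^2 - ((a 4 - a 12)+(a 6 - a 14))^2
        - ((a 1 - a 9)+(a 3 - a 11))^2 + ((a 5 - a 13)+(a 7 - a 15))^2)^2
      + (2*(((a 0 - a 8)+(a 2 - a 10))*((a 4 - a 12)+(a 6 - a 14))
        - ((a 1 - a 9)+(a 3 - a 11))*((a 5 - a 13)+(a 7 - a 15))))^2 := by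
    have h2 : (B:ℂ) = (((((a 0 - a 8)+(a 2 - a 10))^2 - ((a 4 - a 12)+(a 6 - a 14))^2
        - ((a 1 - a 9)+(a 3 - a 11))^2 + ((a 5 - a 13)+(a 7 - a 15))^2)^2
      + (2*(((a 0 - a 8)+(a 2 - a 10))*((a 4 - a 12)+(a 6 - a 14))
        - ((a 1 - a 9)+(a 3 - a 11))*((a 5 - a 13)+(a 7 - a 15))))^2 : ℤ) : ℂ) := by
      rw [hB, hbeta, mulConjEq]
    exact_mod_cast h2
  have hGval : G = (((a 0 - a 8)-(a 2 - a 10))^2 - ((a 4 - a 12)-(a 6 - a 14))^2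
        + ((a 1 - a 9)-(a 3 - a 11))^2 - ((a 5 - a 13)-(a 7 - a 15))^2)^2
      + (2*(((a 0 - a 8)-(a 2 - a 10))*((a 4 - a 12)-(a 6 - a 14))
        + ((a 1 - a 9)-(a 3 - a 11))*((a 5 - a 13)-(a 7 - a 15))))^2 := by
    have h2 : (G:ℂ) = (((((a 0 - a 8)-(a 2 - a 10))^2 - ((a 4 - a 12)-(a 6 - a 14))^2
        + ((a 1 - a 9)-(a 3 - a 11))^2 - ((a 5 - a 13)-(a 7 - a 15))^2)^2
      + (2*(((a 0 - a 8)-(a 2 - a 10))*((a 4 - a 12)-(a 6 - a 14))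
        + ((a 1 - a 9)-(a 3 - a 11))*((a 5 - a 13)-(a 7 - a 15))))^2 : ℤ) : ℂ) := by
      rw [hG, hgamma, mulConjEq]
    exact_mod_cast h2
  have hpar : ¬ (2:ℤ) ∣ ((a 0 - a 8) + (a 1 - a 9) + (a 2 - a 10) + (a 3 - a 11)
      + (a 4 - a 12) + (a 5 - a 13) + (a 6 - a 14) + (a 7 - a 15)) := by
    intro hdvd
    apply h
    have hb : (2:ℤ) ∣ (bI a 1 + bI a 3 - (bI a 0 + bI a 2)) := by
      simp only [bI]
      norm_num
      omega
    exact (Int.modEq_iff_dvd.mpr hb)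
  obtain ⟨k, hk⟩ := Fkey _ _ _ _ _ _ _ _ hpar
  refine Int.ModEq.symm (Int.modEq_iff_dvd.mpr ?_)
  have hexp : B - G - 4 * (bI a 0 * bI a 2 + bI a 1 * bI a 3 + cI a 0 * cI a 2 + cI a 1 * cI a 3)
      = Fpoly (a 0 - a 8) (a 1 - a 9) (a 2 - a 10) (a 3 - a 11)
          (a 4 - a 12) (a 5 - a 13) (a 6 - a 14) (a 7 - a 15)
        - 16 * ((1) * (a 7) * (a 13) + (1) * (a 6) * (a 12) + (1) * (a 5) * (a 15) + (1) * (a 4) * (a 14) + (1) * (a 3) * (a 9) + (1) * (a 2) * (a 8) + (1) * (a 1) * (a 11) + (1) * (a 0) * (a 10)) := by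
    rw [hBval, hGval]
    simp only [bI, cI, Fpoly]
    norm_num
    ring
  refine ⟨k - ((1) * (a 7) * (a 13) + (1) * (a 6) * (a 12) + (1) * (a 5) * (a 15) + (1) * (a 4) * (a 14) + (1) * (a 3) * (a 9) + (1) * (a 2) * (a 8) + (1) * (a 1) * (a 11) + (1) * (a 0) * (a 10)), ?_⟩
  rw [hk] at hexp
  linarith [hexp]
end

section
/- With the notation below, suppose b_0+b_2 ≢ b_1+b_3 (mod 2) and ββ̄ ≡ −3 (mod 8). Then: (1) if b_0b_2+b_1b_3+c_0c_2+c_1c_3 ≡ 0 (mod 4), then ββ̄·γγ̄ = (8j+1)(8m−3)(8n−3) for some integer j and primes 8m−3, 8n−3 ∈ P with j ≡ m+n (mod 2); (2) if b_0b_2+b_1b_3+c_0c_2+c_1c_3 ≡ 2 (mod 4), then ββ̄·γγ̄ = (8j+1)(8m−3)(8n−3) for some integer j and primes 8m−3, 8n−3 ∈ P with j ≢ m+n (mod 2). -/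
open Matrix Complex

def Pset : Set ℤ := {p : ℤ | Prime p ∧ 0 < p ∧ p ≡ -3 [ZMOD 8]}

/-!
Write `β = X + 2V·i` and `γ = Z + 2U·i` with `X, V, Z, U ∈ ℤ`, so that `ββ̄ = X² + 4V²` and
`γγ̄ = Z² + 4U²`. Now `ββ̄ ≡ 5 (mod 8)` means that `X` and `V` are odd, and since `Z ≡ X` and
`U ≡ V (mod 2)` the same holds for `γγ̄`. As `V = (d₀+d₂)(d₄+d₆) - (d₁+d₃)(d₅+d₇)` is odd, one of
these two products has odd factors; each odd `x + y` gives `x² + y² ≡ 1 (mod 4)` and `xy` even, and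
this yields `Z = ±(X + 4k)` with `k ≡ d₀d₂ + d₄d₆ + d₁d₃ + d₅d₇ (mod 2)`. Hence
`ββ̄·γγ̄ ≡ 9 + 8k (mod 16)`, while `b₀b₂ + b₁b₃ + c₀c₂ + c₁c₃ ≡ 2k (mod 4)`.

A sum of two squares `n ≡ 5 (mod 8)` has a prime factor `p ≡ 5 (mod 8)`: writing `n = a²b` with `-1`
a square mod `b`, all prime factors of `b` are `≡ 1 (mod 4)`, and they cannot all be `≡ 1 (mod 8)`.
Splitting off `8m - 3 ∣ ββ̄` and `8n - 3 ∣ γγ̄` leaves a cofactor `8j + 1`, and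
`(8j + 1)(8m - 3)(8n - 3) ≡ 9 + 8(j + m + n) (mod 16)` compares the parity of `j - m - n` with `k`.
-/

lemma Int.sq_emod_eight_of_odd {x : ℤ} (hx : Odd x) : x ^ 2 % 8 = 1 := by
  obtain ⟨a, rfl⟩ := hx
  obtain ⟨t, ht⟩ := Int.even_mul_succ_self a
  have h : (2 * a + 1) ^ 2 = 8 * t + 1 := by linear_combination 4 * ht
  omega

lemma sq_add_two_mul_sq_modEq_neg_three_iff {X V : ℤ} :
    X ^ 2 + (2 * V) ^ 2 ≡ -3 [ZMOD 8] ↔ Odd X ∧ Odd V := by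
  have hX : X % 2 = 1 ∧ X ^ 2 % 8 = 1 ∨ X % 2 = 0 ∧ X ^ 2 % 4 = 0 := by
    rcases Int.even_or_odd' X with ⟨a, rfl | rfl⟩
    · right; constructor <;> ring_nf <;> omega
    · left; exact ⟨by omega, Int.sq_emod_eight_of_odd (odd_two_mul_add_one a)⟩
  have hV : (2 * V) ^ 2 = 4 * V ^ 2 := by ring
  have hV2 : V ^ 2 % 2 = V % 2 := by
    rcases Int.emod_two_eq V with h | h <;> simp [pow_two, Int.mul_emod, h]
  rw [Int.ModEq, hV, Int.odd_iff, Int.odd_iff]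
  omega

lemma sq_add_sq_emod_four_of_odd_add {x y : ℤ} (h : Odd (x + y)) :
    (x ^ 2 + y ^ 2) % 4 = 1 ∧ x * y % 2 = 0 := by
  have hxy : Even (x * y) := by
    rcases Int.even_or_odd x with hx | hx
    · exact hx.mul_right y
    · exact ((Int.odd_add.mp h).mp hx).mul_left x
  have hsq := Int.sq_mod_four_eq_one_of_odd h
  have hexp : (x + y) ^ 2 = x ^ 2 + y ^ 2 + 2 * (x * y) := by ring
  rw [Int.even_iff] at hxy
  omega

lemma odd_and_odd_or_odd_and_odd_of_odd_mul_sub_mul {A B C D : ℤ} (h : Odd (A * B - C * D)) :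
    (Odd A ∧ Odd B) ∨ (Odd C ∧ Odd D) := by
  rw [Int.odd_sub] at h
  by_cases hAB : Odd (A * B)
  · exact Or.inl (Int.odd_mul.mp hAB)
  · exact Or.inr (Int.odd_mul.mp (Int.not_even_iff_odd.mp (mt h.mpr hAB)))

lemma sq_add_two_mul_sq_mul_modEq_nine_iff {X V U k : ℤ} (hX : Odd X) (hV : Odd V)
    (hU : Odd U) :
    (X ^ 2 + (2 * V) ^ 2) * ((X + 4 * k) ^ 2 + (2 * U) ^ 2) ≡ 9 [ZMOD 16] ↔ Even k := by
  obtain ⟨a, rfl⟩ := hX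
  obtain ⟨b, rfl⟩ := hV
  obtain ⟨c, rfl⟩ := hU
  obtain ⟨t, ht⟩ := Int.even_mul_succ_self a
  obtain ⟨r, hr⟩ := Int.even_mul_succ_self b
  obtain ⟨s, hs⟩ := Int.even_mul_succ_self c
  have hB : (2 * a + 1) ^ 2 + (2 * (2 * b + 1)) ^ 2 = 8 * t + 5 + 32 * r := by
    linear_combination 4 * ht + 16 * hr
  have hG : (2 * a + 1 + 4 * k) ^ 2 + (2 * (2 * c + 1)) ^ 2 =
      8 * t + 8 * k + 5 + 16 * (k * (a + k) + 2 * s) := by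
    linear_combination 4 * ht + 16 * hs
  rw [hB, hG, Int.ModEq, Int.even_iff]
  ring_nf
  omega

lemma mul_mul_modEq_nine_iff (j m n : ℤ) :
    (8 * j + 1) * (8 * m - 3) * (8 * n - 3) ≡ 9 [ZMOD 16] ↔ j ≡ m + n [ZMOD 2] := by
  rw [Int.ModEq, Int.ModEq]
  ring_nf
  omega

lemma Nat.modEq_one_of_forall_prime_dvd {m n : ℕ} (hn : n ≠ 0)
    (h : ∀ p, p.Prime → p ∣ n → p ≡ 1 [MOD m]) : n ≡ 1 [MOD m] := by
  induction n using induction_on_primes with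
  | zero => exact absurd rfl hn
  | one => rfl
  | prime_mul p a hp ih =>
    have ha : a ≠ 0 := right_ne_zero_of_mul hn
    simpa using (h p hp (dvd_mul_right p a)).mul
      (ih ha fun q hq hqa => h q hq (hqa.mul_left p))

lemma Nat.exists_prime_emod_eight_eq_five_dvd {n : ℕ} (hn : ∃ x y, n = x ^ 2 + y ^ 2)
    (h5 : n % 8 = 5) : ∃ p, p.Prime ∧ p % 8 = 5 ∧ p ∣ n := by
  obtain ⟨a, b, rfl, hb⟩ := Nat.eq_sq_add_sq_iff_eq_sq_mul.mp hn
  by_contra! hno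
  have hb1 : b ≡ 1 [MOD 8] := by
    refine Nat.modEq_one_of_forall_prime_dvd (by rintro rfl; simp at h5) fun q hq hqb => ?_
    have hq4 : q % 4 ≠ 3 := Nat.mod_four_ne_three_of_mem_primeFactors_of_isSquare_neg_one
      (Nat.mem_primeFactors.mpr ⟨hq, hqb, by rintro rfl; simp at h5⟩) hb
    have hq2 : q % 2 = 1 := by
      rcases hq.eq_two_or_odd with rfl | h
      · have := dvd_mul_of_dvd_right hqb (a ^ 2)
        omega
      · exact h
    have hq5 : q % 8 ≠ 5 := fun h => hno q hq h (dvd_mul_of_dvd_right hqb _)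
    rw [Nat.ModEq]
    omega
  have ha : Odd a := by
    by_contra ha
    rw [Nat.not_odd_iff_even] at ha
    obtain ⟨c, rfl⟩ := ha
    have : (c + c) ^ 2 * b = 4 * (c ^ 2 * b) := by ring
    omega
  have ha8 : a ^ 2 % 8 = 1 := by
    have := Int.sq_emod_eight_of_odd ((Int.odd_coe_nat a).mpr ha)
    exact_mod_cast this
  have := Nat.mul_mod (a ^ 2) b 8
  rw [Nat.ModEq] at hb1
  rw [ha8, hb1] at this
  omega

lemma exists_mem_Pset_dvd {N x y : ℤ} (hN : N = x ^ 2 + y ^ 2) (h3 : N ≡ -3 [ZMOD 8]) :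
    ∃ p ∈ Pset, p ∣ N := by
  have hN0 : 0 ≤ N := hN ▸ by positivity
  have hn : N.natAbs = x.natAbs ^ 2 + y.natAbs ^ 2 := by
    zify
    rw [sq_abs, sq_abs, abs_of_nonneg hN0, hN]
  have hN8 : N.natAbs % 8 = 5 := by
    have := Int.natAbs_of_nonneg hN0
    rw [Int.ModEq] at h3
    omega
  obtain ⟨p, hp, hp5, hpN⟩ := Nat.exists_prime_emod_eight_eq_five_dvd ⟨_, _, hn⟩ hN8
  exact ⟨p, ⟨Nat.prime_iff_prime_int.mp hp, by exact_mod_cast hp.pos, by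
    rw [Int.ModEq]; omega⟩, Int.natCast_dvd.mpr hpN⟩

lemma modEq_one_of_mul_modEq_neg_three {p b : ℤ} (hp : p ≡ -3 [ZMOD 8])
    (h : p * b ≡ -3 [ZMOD 8]) : b ≡ 1 [ZMOD 8] := by
  have := (hp.mul_right b).symm.trans h
  rw [Int.ModEq] at *
  omega

lemma exists_mul_eq_of_mem_Pset_dvd {B G p q : ℤ} (hp : p ∈ Pset) (hq : q ∈ Pset)
    (hpB : p ∣ B) (hqG : q ∣ G) (hB : B ≡ -3 [ZMOD 8]) (hG : G ≡ -3 [ZMOD 8]) :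
    ∃ j m n : ℤ, 8 * m - 3 ∈ Pset ∧ 8 * n - 3 ∈ Pset ∧
      B * G = (8 * j + 1) * (8 * m - 3) * (8 * n - 3) := by
  obtain ⟨b, rfl⟩ := hpB
  obtain ⟨g, rfl⟩ := hqG
  have hbg := (modEq_one_of_mul_modEq_neg_three hp.2.2 hB).mul
    (modEq_one_of_mul_modEq_neg_three hq.2.2 hG)
  obtain ⟨m, hm⟩ := hp.2.2.symm.dvd
  obtain ⟨n, hn⟩ := hq.2.2.symm.dvd
  obtain ⟨j, hj⟩ := hbg.symm.dvd
  obtain rfl : p = 8 * m - 3 := by linarith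
  obtain rfl : q = 8 * n - 3 := by linarith
  exact ⟨j, m, n, hp, hq, by linear_combination (8 * m - 3) * (8 * n - 3) * hj⟩

lemma intCast_eq_sq_add_sq_of_eq_mul_conj {N x y : ℤ} {z : ℂ} (hz : z = x + y * I)
    (hN : (N : ℂ) = z * starRingEnd ℂ z) : N = x ^ 2 + y ^ 2 := by
  rw [hz, mul_conj, ← ofReal_intCast x, ← ofReal_intCast y, normSq_add_mul_I] at hN
  exact_mod_cast hN

section BetaGamma

variable (d : ℕ → ℤ)

def betaRe : ℤ := (d 0 + d 2) ^ 2 - (d 4 + d 6) ^ 2 - (d 1 + d 3) ^ 2 + (d 5 + d 7) ^ 2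

def betaHalfIm : ℤ := (d 0 + d 2) * (d 4 + d 6) - (d 1 + d 3) * (d 5 + d 7)

def gammaRe : ℤ := (d 0 - d 2) ^ 2 - (d 4 - d 6) ^ 2 + (d 1 - d 3) ^ 2 - (d 5 - d 7) ^ 2

def gammaHalfIm : ℤ := (d 0 - d 2) * (d 4 - d 6) + (d 1 - d 3) * (d 5 - d 7)

def pairProdSum : ℤ := d 0 * d 2 + d 4 * d 6 + d 1 * d 3 + d 5 * d 7

lemma betaD_eq : betaD d = betaRe d + (2 * betaHalfIm d : ℤ) * I := by
  simp only [betaD, alphaD, betaRe, betaHalfIm]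
  push_cast
  linear_combination ((d 4 : ℂ) + d 6) ^ 2 * I_sq - ((d 5 : ℂ) + d 7) ^ 2 * I_sq

lemma gammaD_eq : gammaD d = gammaRe d + (2 * gammaHalfIm d : ℤ) * I := by
  simp only [gammaD, alphaD, gammaRe, gammaHalfIm]
  push_cast
  linear_combination ((d 4 : ℂ) - d 6) ^ 2 * I_sq + ((d 5 : ℂ) - d 7) ^ 2 * I_sq

lemma odd_gammaRe_iff : Odd (gammaRe d) ↔ Odd (betaRe d) := by
  have h : gammaRe d = betaRe d +
      2 * (d 1 ^ 2 + d 3 ^ 2 - d 5 ^ 2 - d 7 ^ 2 - 2 * d 0 * d 2 + 2 * d 4 * d 6) := by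
    simp only [gammaRe, betaRe]; ring
  simp [h, parity_simps]

lemma odd_gammaHalfIm_iff : Odd (gammaHalfIm d) ↔ Odd (betaHalfIm d) := by
  have h : gammaHalfIm d = betaHalfIm d +
      2 * (d 1 * d 5 + d 3 * d 7 - d 0 * d 6 - d 2 * d 4) := by
    simp only [gammaHalfIm, betaHalfIm]; ring
  simp [h, parity_simps]

end BetaGamma

lemma exists_gammaRe_sq_eq {d : ℕ → ℤ} (hV : Odd (betaHalfIm d)) :
    ∃ k, gammaRe d ^ 2 = (betaRe d + 4 * k) ^ 2 ∧ (Even k ↔ Even (pairProdSum d)) := by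
  rcases odd_and_odd_or_odd_and_odd_of_odd_mul_sub_mul hV with ⟨h0, h1⟩ | ⟨h2, h3⟩
  · have hsum : betaRe d + gammaRe d =
        2 * ((d 0 ^ 2 + d 2 ^ 2) - (d 4 ^ 2 + d 6 ^ 2)) - 4 * (d 1 * d 3 - d 5 * d 7) := by
      simp only [betaRe, gammaRe]; ring
    obtain ⟨hS0, hP0⟩ := sq_add_sq_emod_four_of_odd_add h0
    obtain ⟨hS1, hP1⟩ := sq_add_sq_emod_four_of_odd_add h1
    refine ⟨-(betaRe d + gammaRe d) / 4, ?_, ?_⟩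
    · rw [show betaRe d + 4 * (-(betaRe d + gammaRe d) / 4) = -gammaRe d by omega, neg_sq]
    · simp only [Int.even_iff, pairProdSum]; omega
  · have hdiff : gammaRe d - betaRe d =
        2 * ((d 1 ^ 2 + d 3 ^ 2) - (d 5 ^ 2 + d 7 ^ 2)) - 4 * (d 0 * d 2 - d 4 * d 6) := by
      simp only [betaRe, gammaRe]; ring
    obtain ⟨hS2, hP2⟩ := sq_add_sq_emod_four_of_odd_add h2
    obtain ⟨hS3, hP3⟩ := sq_add_sq_emod_four_of_odd_add h3
    refine ⟨(gammaRe d - betaRe d) / 4, ?_, ?_⟩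
    · rw [show betaRe d + 4 * ((gammaRe d - betaRe d) / 4) = gammaRe d by omega]
    · simp only [Int.even_iff, pairProdSum]; omega

lemma modEq_neg_three_and_mul_modEq_nine_iff {d : ℕ → ℤ} {B G : ℤ}
    (hB : B = betaRe d ^ 2 + (2 * betaHalfIm d) ^ 2)
    (hG : G = gammaRe d ^ 2 + (2 * gammaHalfIm d) ^ 2) (hB3 : B ≡ -3 [ZMOD 8]) :
    G ≡ -3 [ZMOD 8] ∧ (B * G ≡ 9 [ZMOD 16] ↔ Even (pairProdSum d)) := by
  obtain ⟨hX, hV⟩ := sq_add_two_mul_sq_modEq_neg_three_iff.mp (hB ▸ hB3)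
  have hZ := (odd_gammaRe_iff d).mpr hX
  have hU := (odd_gammaHalfIm_iff d).mpr hV
  refine ⟨hG ▸ sq_add_two_mul_sq_modEq_neg_three_iff.mpr ⟨hZ, hU⟩, ?_⟩
  obtain ⟨k, hk, hkP⟩ := exists_gammaRe_sq_eq hV
  rw [hB, hG, hk, ← hkP]
  exact sq_add_two_mul_sq_mul_modEq_nine_iff hX hV hU

lemma bI_mul_add_cI_mul_modEq (a : ℕ → ℤ) :
    bI a 0 * bI a 2 + bI a 1 * bI a 3 + cI a 0 * cI a 2 + cI a 1 * cI a 3 ≡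
      2 * pairProdSum (dd a) [ZMOD 4] :=
  Int.modEq_iff_dvd.mpr ⟨-(a 0 * a 10 + a 8 * a 2 + a 4 * a 14 + a 12 * a 6
    + a 1 * a 11 + a 9 * a 3 + a 5 * a 15 + a 13 * a 7), by
      simp only [bI, cI, pairProdSum, dd]; ring⟩

theorem stmt14_general (a : ℕ → ℤ) (B G : ℤ)
    (hB : (B : ℂ) = betaD (dd a) * (starRingEnd ℂ) (betaD (dd a)))
    (hG : (G : ℂ) = gammaD (dd a) * (starRingEnd ℂ) (gammaD (dd a)))
    (h2 : B ≡ -3 [ZMOD 8]) :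
    ((bI a 0 * bI a 2 + bI a 1 * bI a 3 + cI a 0 * cI a 2 + cI a 1 * cI a 3 ≡ 0 [ZMOD 4]) →
      ∃ j m n : ℤ, (8 * m - 3) ∈ Pset ∧ (8 * n - 3) ∈ Pset ∧ j ≡ m + n [ZMOD 2] ∧
        B * G = (8 * j + 1) * (8 * m - 3) * (8 * n - 3)) ∧
    ((bI a 0 * bI a 2 + bI a 1 * bI a 3 + cI a 0 * cI a 2 + cI a 1 * cI a 3 ≡ 2 [ZMOD 4]) →
      ∃ j m n : ℤ, (8 * m - 3) ∈ Pset ∧ (8 * n - 3) ∈ Pset ∧ ¬ (j ≡ m + n [ZMOD 2]) ∧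
        B * G = (8 * j + 1) * (8 * m - 3) * (8 * n - 3)) := by
  have hBsq := intCast_eq_sq_add_sq_of_eq_mul_conj (betaD_eq (dd a)) hB
  have hGsq := intCast_eq_sq_add_sq_of_eq_mul_conj (gammaD_eq (dd a)) hG
  obtain ⟨hG3, hBG⟩ := modEq_neg_three_and_mul_modEq_nine_iff hBsq hGsq h2
  obtain ⟨p, hp, hpB⟩ := exists_mem_Pset_dvd hBsq h2
  obtain ⟨q, hq, hqG⟩ := exists_mem_Pset_dvd hGsq hG3
  obtain ⟨j, m, n, hm, hn, hprod⟩ := exists_mul_eq_of_mem_Pset_dvd hp hq hpB hqG h2 hG3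
  have hpar : j ≡ m + n [ZMOD 2] ↔ Even (pairProdSum (dd a)) := by
    rw [← mul_mul_modEq_nine_iff, ← hprod, hBG]
  have hsum := bI_mul_add_cI_mul_modEq a
  rw [Int.ModEq] at hsum
  refine ⟨fun hsum0 => ⟨j, m, n, hm, hn, hpar.mpr ?_, hprod⟩,
    fun hsum2 => ⟨j, m, n, hm, hn, fun h => ?_, hprod⟩⟩
  · rw [Int.ModEq] at hsum0
    rw [Int.even_iff]
    omega
  · have := Int.even_iff.mp (hpar.mp h)
    rw [Int.ModEq] at hsum2
    omega

theorem stmt14 (a : ℕ → ℤ) (B G : ℤ)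
    (hB : (B : ℂ) = betaD (dd a) * (starRingEnd ℂ) (betaD (dd a)))
    (hG : (G : ℂ) = gammaD (dd a) * (starRingEnd ℂ) (gammaD (dd a)))
    (h1 : ¬ (bI a 0 + bI a 2 ≡ bI a 1 + bI a 3 [ZMOD 2]))
    (h2 : B ≡ -3 [ZMOD 8]) :
    ((bI a 0 * bI a 2 + bI a 1 * bI a 3 + cI a 0 * cI a 2 + cI a 1 * cI a 3 ≡ 0 [ZMOD 4]) →
      ∃ j m n : ℤ, (8 * m - 3) ∈ Pset ∧ (8 * n - 3) ∈ Pset ∧ j ≡ m + n [ZMOD 2] ∧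
        B * G = (8 * j + 1) * (8 * m - 3) * (8 * n - 3)) ∧
    ((bI a 0 * bI a 2 + bI a 1 * bI a 3 + cI a 0 * cI a 2 + cI a 1 * cI a 3 ≡ 2 [ZMOD 4]) →
      ∃ j m n : ℤ, (8 * m - 3) ∈ Pset ∧ (8 * n - 3) ∈ Pset ∧ ¬ (j ≡ m + n [ZMOD 2]) ∧
        B * G = (8 * j + 1) * (8 * m - 3) * (8 * n - 3)) :=
  stmt14_general a B G hB hG h2
end

section
/- With the notation below: (1) if b_0+b_2 ≡ b_1+b_3 ≡ 0 (mod 2), then ββ̄·γγ̄ is 2^4 times an odd integer when b_0+b_1+b_2+b_3 ≢ c_0+c_1+c_2+c_3 (mod 4), and is divisible by 2^8 when b_0+b_1+b_2+b_3 ≡ c_0+c_1+c_2+c_3 (mod 4); (2) if b_0+b_2 ≡ b_1+b_3 ≡ 1 (mod 2), then, setting d = ((d_0+d_2)(d_5+d_7) + (d_4+d_6)(d_1+d_3))·((d_0−d_2)(d_1−d_3) + (d_4−d_6)(d_5−d_7)), the product ββ̄·γγ̄ is 2^7 times an odd integer when d ≡ 2 (mod 4), and is divisible by 2^8 when d ≡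 0 (mod 4). -/
open Matrix Complex


lemma two_dvd_iff (w : ℤ) : (2:ℤ) ∣ w ↔ (w : ZMod 2) = 0 :=
  (ZMod.intCast_zmod_eq_zero_iff_dvd w 2).symm

lemma odd_of_not_two_dvd {x : ℤ} (h : ¬(2:ℤ)∣x) : Odd x := Int.odd_iff.mpr (by omega)

lemma sq_add_sq_odd {m n : ℤ} (hm : ¬(2:ℤ)∣m) (hn : ¬(2:ℤ)∣n) :
    ∃ t, Odd t ∧ m^2+n^2 = 2*t := by
  obtain ⟨A, hA⟩ := odd_of_not_two_dvd hm
  obtain ⟨C, hC⟩ := odd_of_not_two_dvd hn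
  exact ⟨2*(A^2+A+C^2+C)+1, ⟨A^2+A+C^2+C, rfl⟩, by rw [hA, hC]; ring⟩

lemma sq_add_sq_even {m n : ℤ} (hm : (2:ℤ)∣m) (hn : (2:ℤ)∣n) : ∃ k, m^2+n^2 = 4*k := by
  obtain ⟨A, hA⟩ := hm; obtain ⟨C, hC⟩ := hn
  exact ⟨A^2+C^2, by rw [hA, hC]; ring⟩

lemma L5 (p q r s : ℤ) (h1 : ¬(2:ℤ)∣(p+q)) (h2 : ¬(2:ℤ)∣(r+s)) (h3 : ¬(2:ℤ)∣(p+r)) :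
    ¬(2:ℤ)∣(p*s+q*r) := by
  rw [two_dvd_iff] at h1 h2 h3 ⊢
  push_cast at h1 h2 h3 ⊢
  revert h1 h2 h3
  generalize (p:ZMod 2) = P
  generalize (q:ZMod 2) = Q
  generalize (r:ZMod 2) = R
  generalize (s:ZMod 2) = S
  revert P Q R S
  decide

lemma beta_eq (P Q R S : ℤ) (z : ℂ)
    (hz : z = ((P:ℂ) + Complex.I*Q)^2 - ((R:ℂ) + Complex.I*S)^2) :
    z * (starRingEnd ℂ) z = ((((P+R)^2+(Q+S)^2) * ((P-R)^2+(Q-S)^2) : ℤ) : ℂ) := by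
  subst hz
  simp only [map_sub, map_pow, map_add, _root_.map_mul, Complex.conj_I, map_intCast]
  push_cast
  linear_combination (((Q:ℂ)^2 - (S:ℂ)^2)*(2*((P:ℂ)^2 - (R:ℂ)^2) + (Complex.I^2-1)*((Q:ℂ)^2-(S:ℂ)^2)) - (2*((P:ℂ)*(Q:ℂ) - (R:ℂ)*(S:ℂ)))^2) * Complex.I_sq



lemma gamma_eq (U V X Y : ℤ) (z : ℂ)
    (hz : z = ((U:ℂ) + Complex.I*V)^2 + ((X:ℂ) + Complex.I*Y)^2) :
    z * (starRingEnd ℂ) z = ((((U-Y)^2+(V+X)^2) * ((U+Y)^2+(V-X)^2) : ℤ) : ℂ) := by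
  subst hz
  simp only [map_add, map_pow, _root_.map_mul, Complex.conj_I, map_intCast]
  push_cast
  linear_combination (((V:ℂ)^2 + (Y:ℂ)^2)*(2*((U:ℂ)^2 + (X:ℂ)^2) + (Complex.I^2-1)*((V:ℂ)^2+(Y:ℂ)^2)) - (2*((U:ℂ)*(V:ℂ) + (X:ℂ)*(Y:ℂ)))^2) * Complex.I_sq

lemma L6 (p q r s : ℤ) (h1 : ¬(2:ℤ)∣(p+q)) (h2 : ¬(2:ℤ)∣(r+s)) (h3 : (2:ℤ)∣(p+r)) :
    ¬(2:ℤ)∣(p*r+q*s) := by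
  rw [two_dvd_iff] at h1 h2 h3 ⊢
  push_cast at h1 h2 h3 ⊢
  revert h1 h2 h3
  generalize (p:ZMod 2) = P
  generalize (q:ZMod 2) = Q
  generalize (r:ZMod 2) = R
  generalize (s:ZMod 2) = S
  revert P Q R S
  decide

lemma L9 (m n m' n' : ℤ) (h : ¬(2:ℤ)∣(m+n+m'+n')) :
    ((2:ℤ)∣(m*n - m'*n') ↔ (2:ℤ)∣(m'*n - m*n')) := by
  rw [two_dvd_iff] at h ⊢
  rw [two_dvd_iff]
  push_cast at h ⊢
  revert h
  generalize (m:ZMod 2) = M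
  generalize (n:ZMod 2) = N
  generalize (m':ZMod 2) = M'
  generalize (n':ZMod 2) = N'
  revert M N M' N'
  decide

lemma L10 (m n m' n' : ℤ) (h : ¬(2:ℤ)∣(m+n+m'+n')) (hmn : (2:ℤ)∣(m+n))
    (hw : ¬(2:ℤ)∣(m*n - m'*n')) :
    ¬(2:ℤ)∣m ∧ ¬(2:ℤ)∣n ∧ ¬(2:ℤ)∣(m'^2+n'^2) := by
  rw [two_dvd_iff] at h hmn hw
  rw [two_dvd_iff, two_dvd_iff, two_dvd_iff]
  push_cast at h hmn hw ⊢
  revert h hmn hw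
  generalize (m:ZMod 2) = M
  generalize (n:ZMod 2) = N
  generalize (m':ZMod 2) = M'
  generalize (n':ZMod 2) = N'
  revert M N M' N'
  decide

lemma L10' (m n m' n' : ℤ) (h : ¬(2:ℤ)∣(m+n+m'+n')) (hmn : ¬(2:ℤ)∣(m+n))
    (hw : ¬(2:ℤ)∣(m*n - m'*n')) :
    ¬(2:ℤ)∣m' ∧ ¬(2:ℤ)∣n' ∧ ¬(2:ℤ)∣(m^2+n^2) := by
  rw [two_dvd_iff] at h hmn hw
  rw [two_dvd_iff, two_dvd_iff, two_dvd_iff]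
  push_cast at h hmn hw ⊢
  revert h hmn hw
  generalize (m:ZMod 2) = M
  generalize (n:ZMod 2) = N
  generalize (m':ZMod 2) = M'
  generalize (n':ZMod 2) = N'
  revert M N M' N'
  decide

lemma L11 (m n m' n' : ℤ) (h : ¬(2:ℤ)∣(m+n+m'+n')) (hmn : (2:ℤ)∣(m+n))
    (hw : (2:ℤ)∣(m*n - m'*n')) (hm : ¬(2:ℤ)∣m) : False := by
  rw [two_dvd_iff] at h hmn hw hm
  push_cast at h hmn hw hm
  revert h hmn hw hm
  generalize (m:ZMod 2) = M
  generalize (n:ZMod 2) = N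
  generalize (m':ZMod 2) = M'
  generalize (n':ZMod 2) = N'
  revert M N M' N'
  decide

lemma L11' (m n m' n' : ℤ) (h : ¬(2:ℤ)∣(m+n+m'+n')) (hmn : ¬(2:ℤ)∣(m+n))
    (hw : (2:ℤ)∣(m*n - m'*n')) (hm : ¬(2:ℤ)∣m') : False := by
  rw [two_dvd_iff] at h hmn hw hm
  push_cast at h hmn hw hm
  revert h hmn hw hm
  generalize (m:ZMod 2) = M
  generalize (n:ZMod 2) = N
  generalize (m':ZMod 2) = M'
  generalize (n':ZMod 2) = N'
  revert M N M' N'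
  decide






lemma L3a (m n m' n' : ℤ) (h : ¬(2:ℤ)∣(m+n+m'+n')) :
    (¬(2:ℤ)∣(m*n - m'*n') → ∃ t, Odd t ∧ (m^2+n^2)*(m'^2+n'^2) = 2*t) ∧
    ((2:ℤ)∣(m*n - m'*n') → ∃ k, (m^2+n^2)*(m'^2+n'^2) = 4*k) := by
  constructor
  · intro hw
    by_cases hmn : (2:ℤ) ∣ m+n
    · obtain ⟨hm, hn, hodd⟩ := L10 m n m' n' h hmn hw
      obtain ⟨t, hto, ht⟩ := sq_add_sq_odd hm hn
      exact ⟨t*(m'^2+n'^2), hto.mul (odd_of_not_two_dvd hodd), by rw [ht]; ring⟩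
    · obtain ⟨hm', hn', hodd⟩ := L10' m n m' n' h hmn hw
      obtain ⟨t, hto, ht⟩ := sq_add_sq_odd hm' hn'
      exact ⟨(m^2+n^2)*t, (odd_of_not_two_dvd hodd).mul hto, by rw [ht]; ring⟩
  · intro hw
    by_cases hmn : (2:ℤ) ∣ m+n
    · by_cases hm : (2:ℤ) ∣ m
      · have hn : (2:ℤ) ∣ n := by omega
        obtain ⟨k, hk⟩ := sq_add_sq_even hm hn
        exact ⟨k*(m'^2+n'^2), by rw [hk]; ring⟩
      · exact absurd (L11 m n m' n' h hmn hw hm) not_false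
    · by_cases hm' : (2:ℤ) ∣ m'
      · have hn' : (2:ℤ) ∣ n' := by omega
        obtain ⟨k, hk⟩ := sq_add_sq_even hm' hn'
        exact ⟨(m^2+n^2)*k, by rw [hk]; ring⟩
      · exact absurd (L11' m n m' n' h hmn hw hm') not_false

lemma L3b (m n m' n' : ℤ) (h : ¬(2:ℤ)∣(m+n+m'+n')) :
    (¬(2:ℤ)∣(m'*n - m*n') → ∃ t, Odd t ∧ (m^2+n^2)*(m'^2+n'^2) = 2*t) ∧
    ((2:ℤ)∣(m'*n - m*n') → ∃ k, (m^2+n^2)*(m'^2+n'^2) = 4*k) := by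
  obtain ⟨c1, c2⟩ := L3a m n m' n' h
  have h9 := L9 m n m' n' h
  exact ⟨fun hw => c1 (fun hd => hw (h9.mp hd)), fun hw => c2 (h9.mpr hw)⟩

lemma odd_mul_twoW (z W D : ℤ) (hD : D = (2*z+1)*(2*W)) :
    ((4:ℤ) ∣ 2 - D → ¬(2:ℤ)∣W) ∧ ((4:ℤ) ∣ D → (2:ℤ)∣W) := by
  constructor
  · intro h4 hW
    obtain ⟨w', hw'⟩ := hW
    have h4D : (4:ℤ) ∣ D := ⟨(2*z+1)*w', by rw [hD, hw']; ring⟩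
    have : (4:ℤ) ∣ 2 := by have := dvd_add h4 h4D; simpa using this
    omega
  · intro h4D
    by_contra hW
    obtain ⟨w', hw'⟩ := odd_of_not_two_dvd hW
    have h42 : (4:ℤ) ∣ 2 - D := ⟨-(2*z*w' + z + w'), by rw [hD, hw']; ring⟩
    have : (4:ℤ) ∣ 2 := by have := dvd_add h42 h4D; simpa using this
    omega


lemma core (p q r s u v x y B G : ℤ)
    (h1 : (2:ℤ) ∣ p - u) (h2 : (2:ℤ) ∣ q - v) (h3 : (2:ℤ) ∣ r - x) (h4 : (2:ℤ) ∣ s - y)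
    (hB : B = ((p+r)^2+(q+s)^2) * ((p-r)^2+(q-s)^2))
    (hG : G = ((u-y)^2+(v+x)^2) * ((u+y)^2+(v-x)^2)) :
    (((2:ℤ)∣p+q → (2:ℤ)∣r+s →
      (¬(2:ℤ)∣q+s → ∃ t, Odd t ∧ B*G = 2^4*t) ∧ ((2:ℤ)∣q+s → (2^8:ℤ) ∣ B*G))) ∧
    (¬(2:ℤ)∣(p+q) → ¬(2:ℤ)∣(r+s) →
      ((4:ℤ) ∣ 2 - (p*s+q*r)*(u*x+v*y) → ∃ t, Odd t ∧ B*G = 2^7*t) ∧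
      ((4:ℤ) ∣ (p*s+q*r)*(u*x+v*y) → (2^8:ℤ) ∣ B*G)) := by
  constructor
  · intro hp hr
    constructor
    · intro hqs
      obtain ⟨t1, ht1o, ht1⟩ := sq_add_sq_odd (m := p+r) (n := q+s) (by omega) (by omega)
      obtain ⟨t2, ht2o, ht2⟩ := sq_add_sq_odd (m := p-r) (n := q-s) (by omega) (by omega)
      obtain ⟨t3, ht3o, ht3⟩ := sq_add_sq_odd (m := u-y) (n := v+x) (by omega) (by omega)
      obtain ⟨t4, ht4o, ht4⟩ := sq_add_sq_odd (m := u+y) (n := v-x) (by omega) (by omega)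
      exact ⟨t1*t2*(t3*t4), (ht1o.mul ht2o).mul (ht3o.mul ht4o),
        by rw [hB, hG, ht1, ht2, ht3, ht4]; ring⟩
    · intro hqs
      obtain ⟨k1, hk1⟩ := sq_add_sq_even (m := p+r) (n := q+s) (by omega) (by omega)
      obtain ⟨k2, hk2⟩ := sq_add_sq_even (m := p-r) (n := q-s) (by omega) (by omega)
      obtain ⟨k3, hk3⟩ := sq_add_sq_even (m := u-y) (n := v+x) (by omega) (by omega)
      obtain ⟨k4, hk4⟩ := sq_add_sq_even (m := u+y) (n := v-x) (by omega) (by omega)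
      exact ⟨k1*k2*(k3*k4), by rw [hB, hG, hk1, hk2, hk3, hk4]; ring⟩
  · intro hp hr
    by_cases hpr : (2:ℤ) ∣ p + r
    · -- sub B : G = 4·odd, B = 16·(diagonal product)
      obtain ⟨t3, ht3o, ht3⟩ := sq_add_sq_odd (m := u-y) (n := v+x) (by omega) (by omega)
      obtain ⟨t4, ht4o, ht4⟩ := sq_add_sq_odd (m := u+y) (n := v-x) (by omega) (by omega)
      obtain ⟨m, hm⟩ : ∃ m, p + r = 2*m := ⟨(p+r)/2, by omega⟩
      obtain ⟨n, hn⟩ : ∃ n, q + s = 2*n := ⟨(q+s)/2, by omega⟩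
      obtain ⟨m', hm'⟩ : ∃ m', p - r = 2*m' := ⟨(p-r)/2, by omega⟩
      obtain ⟨n', hn'⟩ : ∃ n', q - s = 2*n' := ⟨(q-s)/2, by omega⟩
      have hB16 : B = 16*((m^2+n^2)*(m'^2+n'^2)) := by rw [hB, hm, hn, hm', hn']; ring
      have hkey : p*s + q*r = 2*(m*n - m'*n') := by
        have e1 : p = m + m' := by omega
        have e2 : r = m - m' := by omega
        have e3 : q = n + n' := by omega
        have e4 : s = n - n' := by omega
        rw [e1, e2, e3, e4]; ring
      have hO : ¬(2:ℤ)∣(u*x + v*y) := L6 u v x y (by omega) (by omega) (by omega)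
      obtain ⟨z, hz⟩ := odd_of_not_two_dvd hO
      have hDeq : (p*s+q*r)*(u*x+v*y) = (2*z+1)*(2*(m*n - m'*n')) := by
        rw [hkey, hz]; ring
      obtain ⟨c1, c2⟩ := odd_mul_twoW z (m*n - m'*n') _ hDeq
      have hsum : ¬(2:ℤ)∣(m+n+m'+n') := by omega
      constructor
      · intro hD
        obtain ⟨T, hTo, hT⟩ := (L3a m n m' n' hsum).1 (c1 hD)
        exact ⟨T*(t3*t4), hTo.mul (ht3o.mul ht4o), by rw [hB16, hG, ht3, ht4, hT]; ring⟩
      · intro hD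
        obtain ⟨K, hK⟩ := (L3a m n m' n' hsum).2 (c2 hD)
        exact ⟨K*(t3*t4), by rw [hB16, hG, ht3, ht4, hK]; ring⟩
    · -- sub A : B = 4·odd, G = 16·(cross product)
      obtain ⟨t1, ht1o, ht1⟩ := sq_add_sq_odd (m := p+r) (n := q+s) (by omega) (by omega)
      obtain ⟨t2, ht2o, ht2⟩ := sq_add_sq_odd (m := p-r) (n := q-s) (by omega) (by omega)
      obtain ⟨A, hA⟩ : ∃ A, u - y = 2*A := ⟨(u-y)/2, by omega⟩
      obtain ⟨Bb, hBb⟩ : ∃ Bb, v + x = 2*Bb := ⟨(v+x)/2, by omega⟩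
      obtain ⟨C, hC⟩ : ∃ C, u + y = 2*C := ⟨(u+y)/2, by omega⟩
      obtain ⟨Dd, hDd⟩ : ∃ Dd, v - x = 2*Dd := ⟨(v-x)/2, by omega⟩
      have hG16 : G = 16*((A^2+Bb^2)*(C^2+Dd^2)) := by rw [hG, hA, hBb, hC, hDd]; ring
      have hkey : u*x + v*y = 2*(C*Bb - A*Dd) := by
        have e1 : u = A + C := by omega
        have e2 : y = C - A := by omega
        have e3 : v = Bb + Dd := by omega
        have e4 : x = Bb - Dd := by omega
        rw [e1, e2, e3, e4]; ring
      have hO : ¬(2:ℤ)∣(p*s + q*r) := L5 p q r s (by omega) (by omega) (by omega)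
      obtain ⟨z, hz⟩ := odd_of_not_two_dvd hO
      have hDeq : (p*s+q*r)*(u*x+v*y) = (2*z+1)*(2*(C*Bb - A*Dd)) := by
        rw [hkey, hz]
      obtain ⟨c1, c2⟩ := odd_mul_twoW z (C*Bb - A*Dd) _ hDeq
      have hsum : ¬(2:ℤ)∣(A+Bb+C+Dd) := by omega
      constructor
      · intro hD
        obtain ⟨T, hTo, hT⟩ := (L3b A Bb C Dd hsum).1 (c1 hD)
        exact ⟨t1*t2*T, (ht1o.mul ht2o).mul hTo, by rw [hB, hG16, ht1, ht2, hT]; ring⟩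
      · intro hD
        obtain ⟨K, hK⟩ := (L3b A Bb C Dd hsum).2 (c2 hD)
        exact ⟨t1*t2*K, by rw [hB, hG16, ht1, ht2, hK]; ring⟩


theorem stmt17 (a : ℕ → ℤ) (B G : ℤ)
    (hB : (B : ℂ) = betaD (dd a) * (starRingEnd ℂ) (betaD (dd a)))
    (hG : (G : ℂ) = gammaD (dd a) * (starRingEnd ℂ) (gammaD (dd a))) :
    ((bI a 0 + bI a 2 ≡ 0 [ZMOD 2] ∧ bI a 1 + bI a 3 ≡ 0 [ZMOD 2]) →
      ((¬ (bI a 0 + bI a 1 + bI a 2 + bI a 3 ≡ cI a 0 + cI a 1 + cI a 2 + cI a 3 [ZMOD 4])) →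
        ∃ t : ℤ, Odd t ∧ B * G = 2 ^ 4 * t) ∧
      ((bI a 0 + bI a 1 + bI a 2 + bI a 3 ≡ cI a 0 + cI a 1 + cI a 2 + cI a 3 [ZMOD 4]) →
        (2 ^ 8 : ℤ) ∣ B * G)) ∧
    ((bI a 0 + bI a 2 ≡ 1 [ZMOD 2] ∧ bI a 1 + bI a 3 ≡ 1 [ZMOD 2]) →
      ((((dd a 0 + dd a 2) * (dd a 5 + dd a 7) + (dd a 4 + dd a 6) * (dd a 1 + dd a 3)) *
          ((dd a 0 - dd a 2) * (dd a 1 - dd a 3) + (dd a 4 - dd a 6) * (dd a 5 - dd a 7)) ≡ 2 [ZMOD 4] →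
        ∃ t : ℤ, Odd t ∧ B * G = 2 ^ 7 * t) ∧
      (((dd a 0 + dd a 2) * (dd a 5 + dd a 7) + (dd a 4 + dd a 6) * (dd a 1 + dd a 3)) *
          ((dd a 0 - dd a 2) * (dd a 1 - dd a 3) + (dd a 4 - dd a 6) * (dd a 5 - dd a 7)) ≡ 0 [ZMOD 4] →
        (2 ^ 8 : ℤ) ∣ B * G))) := by
  have hb1 : betaD (dd a) =
      (((dd a 0 + dd a 2 : ℤ) : ℂ) + Complex.I * ((dd a 4 + dd a 6 : ℤ) : ℂ))^2
      - (((dd a 1 + dd a 3 : ℤ) : ℂ) + Complex.I * ((dd a 5 + dd a 7 : ℤ) : ℂ))^2 := by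
    simp only [betaD, alphaD]
    norm_num
    ring
  have hg1 : gammaD (dd a) =
      (((dd a 0 - dd a 2 : ℤ) : ℂ) + Complex.I * ((dd a 4 - dd a 6 : ℤ) : ℂ))^2
      + (((dd a 1 - dd a 3 : ℤ) : ℂ) + Complex.I * ((dd a 5 - dd a 7 : ℤ) : ℂ))^2 := by
    simp only [gammaD, alphaD]
    norm_num
    ring
  have hBint : B = (((dd a 0 + dd a 2)+(dd a 1 + dd a 3))^2 + ((dd a 4 + dd a 6)+(dd a 5 + dd a 7))^2)
      * (((dd a 0 + dd a 2)-(dd a 1 + dd a 3))^2 + ((dd a 4 + dd a 6)-(dd a 5 + dd a 7))^2) := by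
    have := hB.trans (beta_eq _ _ _ _ _ hb1)
    exact_mod_cast this
  have hGint : G = (((dd a 0 - dd a 2)-(dd a 5 - dd a 7))^2 + ((dd a 4 - dd a 6)+(dd a 1 - dd a 3))^2)
      * (((dd a 0 - dd a 2)+(dd a 5 - dd a 7))^2 + ((dd a 4 - dd a 6)-(dd a 1 - dd a 3))^2) := by
    have := hG.trans (gamma_eq _ _ _ _ _ hg1)
    exact_mod_cast this
  have main := core (dd a 0 + dd a 2) (dd a 4 + dd a 6) (dd a 1 + dd a 3) (dd a 5 + dd a 7)
      (dd a 0 - dd a 2) (dd a 4 - dd a 6) (dd a 1 - dd a 3) (dd a 5 - dd a 7) B G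
      ⟨dd a 2, by ring⟩ ⟨dd a 6, by ring⟩ ⟨dd a 3, by ring⟩ ⟨dd a 7, by ring⟩ hBint hGint
  constructor
  · rintro ⟨hb02, hb13⟩
    have hpq : (2:ℤ) ∣ (dd a 0 + dd a 2) + (dd a 4 + dd a 6) := by
      have := Int.modEq_zero_iff_dvd.mp hb02
      simp only [bI] at this
      simp only [dd]
      norm_num at this ⊢
      omega
    have hrs : (2:ℤ) ∣ (dd a 1 + dd a 3) + (dd a 5 + dd a 7) := by
      have := Int.modEq_zero_iff_dvd.mp hb13
      simp only [bI] at this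
      simp only [dd]
      norm_num at this ⊢
      omega
    have m1 := main.1 hpq hrs
    constructor
    · intro hbc
      refine m1.1 ?_
      intro hqs
      apply hbc
      rw [Int.modEq_iff_dvd]
      simp only [bI, cI]
      simp only [dd] at hqs
      norm_num at hqs ⊢
      omega
    · intro hbc
      refine m1.2 ?_
      have := Int.ModEq.dvd hbc
      simp only [bI, cI] at this
      simp only [dd]
      norm_num at this ⊢
      omega
  · rintro ⟨hb02, hb13⟩
    have hpq : ¬(2:ℤ) ∣ (dd a 0 + dd a 2) + (dd a 4 + dd a 6) := by
      have := Int.ModEq.dvd hb02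
      simp only [bI] at this
      simp only [dd]
      norm_num at this ⊢
      omega
    have hrs : ¬(2:ℤ) ∣ (dd a 1 + dd a 3) + (dd a 5 + dd a 7) := by
      have := Int.ModEq.dvd hb13
      simp only [bI] at this
      simp only [dd]
      norm_num at this ⊢
      omega
    have m2 := main.2 hpq hrs
    exact ⟨fun hD => m2.1 (Int.ModEq.dvd hD), fun hD => m2.2 (Int.modEq_zero_iff_dvd.mp hD)⟩
end
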